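/- arXiv:2009.05435 — 5 statements merged into one kernel-verified Lean document; each statement's English description precedes it below -/
import Mathlib

section
/- Let q ≥ 2 be an integer and let f be a real-valued q-additive function such that both series ∑_{j≥0} ∑_{d=1}^{q-1} f(d·q^j) and ∑_{j≥0} ∑_{d=1}^{q-1} f(d·q^j)² converge. Then for every real t, lim_{N→∞} (1/N) ∑_{n<N} e^{i t f(n)} = ∏_{j≥0} ( (1/q) ∑_{d=0}^{q-1} e^{i t f(d q^j)} ), i.e. the characteristic function of the limiting distribution is given by this convergent infinite product. -/
/-!
Let `c_j = (1/q) ∑_{d<q} e^{i t f(d q^j)}`. Since `log c_j = (c_j - 1) + O(|c_j - 1|²)`,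
`c_j - 1 = (i t / q) ∑_d f(d q^j) + O(t² ∑_d f(d q^j)²)` and `|c_j - 1|² ≤ q t² ∑_d f(d q^j)²`,
the two hypotheses make `∑_j log c_j` converge (conditionally), so the tail products
`P_s = ∏_{j ≥ s} c_j` exist, `P_s = c_s P_{s+1}` and `P_s → 1`.

The map `g n = e^{i t f(n)}` is `q`-multiplicative, so writing `N = M q + r` with `r < q`,
`∑_{n<N} g(n q^s) = q c_s ∑_{m<M} g(m q^{s+1}) + g(M q^{s+1}) ∑_{e<r} g(e q^s)`, while
`N P_s = q c_s M P_{s+1} + r P_s`. Induction on the number of digits of `N` bounds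
`|∑_{n<N} g(n) - N P_0|` by `∑_{k<L} q^k w_k`, where `q^{L-1} ≤ N < q^L` and
`w_k = 3 ∑_{d<q} |g(d q^k) - 1| + q |1 - P_k| → 0`; such geometric averages of a null sequence,
divided by `q^L`, tend to `0`.
-/

open Filter Finset Topology

/-- `f : ℕ → ℝ` is `q`-additive. -/
def IsQAdditive (q : ℕ) (f : ℕ → ℝ) : Prop :=
  ∀ n : ℕ, f n = ∑ j ∈ Finset.range n, f (n / q ^ j % q * q ^ j)

/-- Empirical characteristic function `φ_N(t) = (1/N) ∑_{n<N} e^{i t f(n)}`. -/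
noncomputable def empCharFun (f : ℕ → ℝ) (N : ℕ) (t : ℝ) : ℂ :=
  (∑ n ∈ Finset.range N, Complex.exp (Complex.I * t * f n)) / N

namespace Nat

lemma add_mul_pow_div_pow_mod_of_lt {q : ℕ} (hq : 0 < q) (a m : ℕ) {s j : ℕ} (hj : j < s) :
    (a + m * q ^ s) / q ^ j % q = a / q ^ j % q := by
  have hs : m * q ^ s = m * q ^ (s - j - 1) * q * q ^ j := by
    rw [mul_assoc, mul_assoc, ← pow_succ', ← pow_add]; congr 2; omega
  rw [hs, Nat.add_mul_div_right _ _ (pow_pos hq j), Nat.add_mul_mod_self_right]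

lemma add_mul_pow_div_pow_of_le {q a m s j : ℕ} (ha : a < q ^ s) (hj : s ≤ j) :
    (a + m * q ^ s) / q ^ j = m / q ^ (j - s) := by
  obtain ⟨k, rfl⟩ := Nat.exists_eq_add_of_le hj
  rw [pow_add, ← Nat.div_div_eq_div_mul, Nat.add_mul_div_right _ _ (by omega),
    Nat.div_eq_of_lt ha, zero_add, Nat.add_sub_cancel_left]

end Nat

namespace IsQAdditive

variable {q : ℕ} {f : ℕ → ℝ}

lemma map_zero (hf : IsQAdditive q f) : f 0 = 0 := by simpa using hf 0

lemma eq_sum_range_of_le (hq : 2 ≤ q) (hf : IsQAdditive q f) {n K : ℕ} (hK : n ≤ K) :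
    f n = ∑ j ∈ range K, f (n / q ^ j % q * q ^ j) := by
  rw [hf n]
  refine sum_subset (range_subset_range.2 hK) fun j _ hj => ?_
  have hnj : n < q ^ j := calc
    n < 2 ^ n := Nat.lt_two_pow_self
    _ ≤ 2 ^ j := Nat.pow_le_pow_right two_pos (by simpa using hj)
    _ ≤ q ^ j := Nat.pow_le_pow_left hq j
  simp [Nat.div_eq_of_lt hnj, hf.map_zero]

lemma map_add_mul_pow (hq : 2 ≤ q) (hf : IsQAdditive q f) {a m s : ℕ} (ha : a < q ^ s) :
    f (a + m * q ^ s) = f a + f (m * q ^ s) := by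
  have hK : ∀ n ≤ a + m * q ^ s,
      f n = ∑ j ∈ range (a + m * q ^ s), f (n / q ^ j % q * q ^ j) :=
    fun n hn => hf.eq_sum_range_of_le hq hn
  rw [hK _ le_rfl, hK a (by omega), hK (m * q ^ s) (by omega), ← sum_add_distrib]
  refine sum_congr rfl fun j _ => ?_
  rcases lt_or_ge j s with hj | hj
  · have h0 := Nat.add_mul_pow_div_pow_mod_of_lt (by omega : 0 < q) 0 m hj
    rw [zero_add] at h0
    simp [Nat.add_mul_pow_div_pow_mod_of_lt (by omega : 0 < q) a m hj, h0, hf.map_zero]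
  · have h0 := Nat.add_mul_pow_div_pow_of_le (m := m) (pow_pos (by omega : 0 < q) s) hj
    rw [zero_add] at h0
    have ha' : a / q ^ j = 0 :=
      Nat.div_eq_of_lt (ha.trans_le (Nat.pow_le_pow_right (by omega) hj))
    simp [Nat.add_mul_pow_div_pow_of_le ha hj, h0, ha', hf.map_zero]

end IsQAdditive

structure IsQMultiplicative (q : ℕ) (g : ℕ → ℂ) : Prop where
  map_zero : g 0 = 1
  map_add_mul_pow {a m s : ℕ} : a < q ^ s → g (a + m * q ^ s) = g a * g (m * q ^ s)

noncomputable def charExp (f : ℕ → ℝ) (t : ℝ) (n : ℕ) : ℂ :=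
  Complex.exp (Complex.I * t * f n)

section charExp

variable {f : ℕ → ℝ} {t : ℝ}

lemma charExp_eq (n : ℕ) :
    charExp f t n = Complex.exp (Complex.I * ((t * f n : ℝ) : ℂ)) := by
  rw [charExp]; push_cast; ring_nf

lemma norm_charExp (n : ℕ) : ‖charExp f t n‖ = 1 := by
  rw [charExp_eq, Complex.norm_exp_I_mul_ofReal]

lemma norm_charExp_sub_one_le (n : ℕ) : ‖charExp f t n - 1‖ ≤ |t * f n| := by
  rw [charExp_eq]; exact Real.norm_exp_I_mul_ofReal_sub_one_le

lemma norm_charExp_sub_one_sub_le (n : ℕ) :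
    ‖charExp f t n - 1 - Complex.I * t * f n‖ ≤ 2 * (t * f n) ^ 2 := by
  have hI : Complex.I * t * f n = Complex.I * ((t * f n : ℝ) : ℂ) := by push_cast; ring
  have hnorm : ‖Complex.I * ((t * f n : ℝ) : ℂ)‖ = |t * f n| := by simp
  rw [hI, charExp_eq]
  rcases le_or_gt |t * f n| 1 with h | h
  · refine (Complex.norm_exp_sub_one_sub_id_le (by rwa [hnorm])).trans ?_
    rw [hnorm, sq_abs]; nlinarith [sq_nonneg (t * f n)]
  · calc _ ≤ ‖Complex.exp (Complex.I * ((t * f n : ℝ) : ℂ)) - 1‖ +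
          ‖Complex.I * ((t * f n : ℝ) : ℂ)‖ := norm_sub_le _ _
      _ ≤ |t * f n| + |t * f n| := by
          rw [hnorm]; exact add_le_add_left Real.norm_exp_I_mul_ofReal_sub_one_le _
      _ ≤ 2 * (t * f n) ^ 2 := by rw [← sq_abs]; nlinarith

end charExp

lemma IsQAdditive.isQMultiplicative_charExp {q : ℕ} {f : ℕ → ℝ} (hq : 2 ≤ q)
    (hf : IsQAdditive q f) (t : ℝ) : IsQMultiplicative q (charExp f t) where
  map_zero := by simp [charExp, hf.map_zero]
  map_add_mul_pow ha := by
    rw [charExp, charExp, charExp, hf.map_add_mul_pow hq ha, ← Complex.exp_add]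
    push_cast
    ring_nf

noncomputable def digitAvg (q : ℕ) (g : ℕ → ℂ) (j : ℕ) : ℂ :=
  (∑ d ∈ range q, g (d * q ^ j)) / q

noncomputable def digitDev (q : ℕ) (g : ℕ → ℂ) (j : ℕ) : ℝ :=
  ∑ d ∈ range q, ‖g (d * q ^ j) - 1‖

section digits

variable {q : ℕ} {g : ℕ → ℂ}

lemma norm_digitAvg_le_one (hg1 : ∀ n, ‖g n‖ ≤ 1) (j : ℕ) : ‖digitAvg q g j‖ ≤ 1 := by
  rcases Nat.eq_zero_or_pos q with rfl | hq
  · simp [digitAvg]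
  rw [digitAvg, norm_div, Complex.norm_natCast, div_le_one (by exact_mod_cast hq)]
  calc ‖∑ d ∈ range q, g (d * q ^ j)‖ ≤ ∑ d ∈ range q, (1 : ℝ) :=
        norm_sum_le_of_le _ fun d _ => hg1 _
    _ = q := by simp

lemma norm_sub_one_le_digitDev {d : ℕ} (hd : d < q) (j : ℕ) :
    ‖g (d * q ^ j) - 1‖ ≤ digitDev q g j :=
  single_le_sum (f := fun d => ‖g (d * q ^ j) - 1‖) (fun _ _ => norm_nonneg _) (mem_range.2 hd)

lemma norm_sum_range_sub_le_digitDev {r : ℕ} (hr : r ≤ q) (j : ℕ) :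
    ‖∑ d ∈ range r, g (d * q ^ j) - r‖ ≤ digitDev q g j := by
  have hsub : ∑ d ∈ range r, g (d * q ^ j) - r = ∑ d ∈ range r, (g (d * q ^ j) - 1) := by
    simp [sum_sub_distrib]
  rw [hsub]
  refine (norm_sum_le _ _).trans ?_
  exact sum_le_sum_of_subset_of_nonneg (range_subset_range.2 hr) fun _ _ _ => norm_nonneg _

lemma norm_mul_sub_one_le {a b : ℂ} (ha : ‖a‖ ≤ 1) : ‖a * b - 1‖ ≤ ‖a - 1‖ + ‖b - 1‖ := calc
  ‖a * b - 1‖ = ‖a * (b - 1) + (a - 1)‖ := by ring_nf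
  _ ≤ ‖a‖ * ‖b - 1‖ + ‖a - 1‖ := (norm_add_le _ _).trans_eq (by rw [norm_mul])
  _ ≤ ‖a - 1‖ + ‖b - 1‖ := by nlinarith [norm_nonneg (b - 1)]

lemma digitAvg_sub_one (hq : q ≠ 0) (j : ℕ) :
    digitAvg q g j - 1 = (∑ d ∈ range q, (g (d * q ^ j) - 1)) / q := by
  rw [digitAvg, sum_sub_distrib, sum_const, card_range, nsmul_one, sub_div,
    div_self (by exact_mod_cast hq)]

lemma norm_sum_range_div_le (hq : q ≠ 0) (h : ℕ → ℂ) :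
    ‖(∑ d ∈ range q, h d) / q‖ ≤ ∑ d ∈ range q, ‖h d‖ := by
  rw [norm_div, Complex.norm_natCast]
  exact div_le_self (norm_nonneg _) (by exact_mod_cast Nat.one_le_iff_ne_zero.2 hq) |>.trans
    (norm_sum_le _ _)

lemma norm_digitAvg_sub_one_le (hq : q ≠ 0) (j : ℕ) :
    ‖digitAvg q g j - 1‖ ≤ digitDev q g j := by
  rw [digitAvg_sub_one hq]; exact norm_sum_range_div_le hq _

end digits

namespace IsQMultiplicative

variable {q : ℕ} {g : ℕ → ℂ}

lemma map_mul_add_mul_pow (hg : IsQMultiplicative q g) {e : ℕ} (he : e < q) (m s : ℕ) :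
    g ((m * q + e) * q ^ s) = g (e * q ^ s) * g (m * q ^ (s + 1)) := by
  have hlt : e * q ^ s < q ^ (s + 1) := by
    rw [pow_succ']; exact Nat.mul_lt_mul_of_pos_right he (pow_pos (by omega) s)
  rw [← hg.map_add_mul_pow hlt]
  ring_nf

lemma sum_range_map_mul_add (hg : IsQMultiplicative q g) {r : ℕ} (hr : r ≤ q) (m s : ℕ) :
    ∑ e ∈ range r, g ((m * q + e) * q ^ s) =
      g (m * q ^ (s + 1)) * ∑ e ∈ range r, g (e * q ^ s) := by
  rw [mul_sum]
  exact sum_congr rfl fun e he => by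
    rw [hg.map_mul_add_mul_pow ((mem_range.1 he).trans_le hr), mul_comm]

lemma sum_range_mul_add (hg : IsQMultiplicative q g) {r : ℕ} (hr : r ≤ q) (M s : ℕ) :
    ∑ n ∈ range (M * q + r), g (n * q ^ s) =
      (∑ d ∈ range q, g (d * q ^ s)) * ∑ m ∈ range M, g (m * q ^ (s + 1)) +
        g (M * q ^ (s + 1)) * ∑ e ∈ range r, g (e * q ^ s) := by
  rw [sum_range_add, hg.sum_range_map_mul_add hr]
  congr 1
  induction M with
  | zero => simp
  | succ M ih =>
    rw [add_mul, one_mul, sum_range_add, ih, hg.sum_range_map_mul_add le_rfl, sum_range_succ]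
    ring

/- The phase term `2 * ‖g (N * q ^ s) - 1‖` of the invariant absorbs the error
`q * ‖g (M * q ^ (s + 1)) - 1‖` caused by the leading digits of `N = M * q + r`,
because `q ≥ 2`. -/
theorem norm_sum_range_sub_le_step (hq : 2 ≤ q) (hg : IsQMultiplicative q g) (hg1 : ∀ n, ‖g n‖ ≤ 1)
    {P : ℕ → ℂ} {s : ℕ} (hP : P s = digitAvg q g s * P (s + 1)) {M r : ℕ} (hr : r < q) :
    ‖∑ n ∈ range (M * q + r), g (n * q ^ s) - ((M * q + r : ℕ) : ℂ) * P s‖ +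
        2 * ‖g ((M * q + r) * q ^ s) - 1‖ ≤
      q * (‖∑ m ∈ range M, g (m * q ^ (s + 1)) - M * P (s + 1)‖ +
          2 * ‖g (M * q ^ (s + 1)) - 1‖) +
        (3 * digitDev q g s + q * ‖1 - P s‖) := by
  set u := g (M * q ^ (s + 1))
  set R := ∑ e ∈ range r, g (e * q ^ s)
  set E := ∑ m ∈ range M, g (m * q ^ (s + 1)) - M * P (s + 1)
  have hq0 : (q : ℂ) ≠ 0 := by norm_cast; omega
  have hrq : (r : ℝ) ≤ q := by exact_mod_cast hr.le
  have hsplit : ∑ n ∈ range (M * q + r), g (n * q ^ s) - ((M * q + r : ℕ) : ℂ) * P s =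
      q * digitAvg q g s * E + (u * (R - r) + r * (u - 1) + r * (1 - P s)) := by
    rw [hg.sum_range_mul_add hr.le, hP, digitAvg]
    field_simp
    push_cast
    ring
  have hE : ‖q * digitAvg q g s * E‖ ≤ q * ‖E‖ := by
    rw [norm_mul, norm_mul, Complex.norm_natCast]
    exact mul_le_mul_of_nonneg_right
      (mul_le_of_le_one_right (Nat.cast_nonneg q) (norm_digitAvg_le_one hg1 s)) (norm_nonneg E)
  have hres : ‖u * (R - r) + r * (u - 1) + r * (1 - P s)‖ ≤
      digitDev q g s + q * ‖u - 1‖ + q * ‖1 - P s‖ := by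
    refine (norm_add₃_le).trans (add_le_add (add_le_add ?_ ?_) ?_)
    · rw [norm_mul]
      exact (mul_le_of_le_one_left (norm_nonneg _) (hg1 _)).trans
        (norm_sum_range_sub_le_digitDev hr.le s)
    · rw [norm_mul, Complex.norm_natCast]; gcongr
    · rw [norm_mul, Complex.norm_natCast]; gcongr
  have hphase : ‖g ((M * q + r) * q ^ s) - 1‖ ≤ digitDev q g s + ‖u - 1‖ := by
    rw [hg.map_mul_add_mul_pow hr]
    exact (norm_mul_sub_one_le (hg1 _)).trans
      (add_le_add_left (norm_sub_one_le_digitDev hr s) _)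
  have hu : (0 : ℝ) ≤ ‖u - 1‖ := norm_nonneg _
  have hq2 : (2 : ℝ) ≤ q := by exact_mod_cast hq
  rw [hsplit]
  nlinarith [norm_add_le (q * digitAvg q g s * E) (u * (R - r) + r * (u - 1) + r * (1 - P s))]

theorem norm_sum_range_sub_le (hq : 2 ≤ q) (hg : IsQMultiplicative q g) (hg1 : ∀ n, ‖g n‖ ≤ 1)
    {P : ℕ → ℂ} (hP : ∀ s, P s = digitAvg q g s * P (s + 1)) (L : ℕ) :
    ∀ N < q ^ L, ∀ s, ‖∑ n ∈ range N, g (n * q ^ s) - N * P s‖ + 2 * ‖g (N * q ^ s) - 1‖ ≤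
      ∑ k ∈ range L, (q : ℝ) ^ k * (3 * digitDev q g (s + k) + q * ‖1 - P (s + k)‖) := by
  induction L with
  | zero => intro N hN s; simp [Nat.lt_one_iff.1 (by simpa using hN), hg.map_zero]
  | succ L ih =>
    intro N hN s
    have hM : N / q < q ^ L := Nat.div_lt_of_lt_mul (by rwa [mul_comm, ← pow_succ])
    have hsum : ∑ k ∈ range (L + 1), (q : ℝ) ^ k *
          (3 * digitDev q g (s + k) + q * ‖1 - P (s + k)‖) =
        q * ∑ k ∈ range L, (q : ℝ) ^ k *
          (3 * digitDev q g (s + 1 + k) + q * ‖1 - P (s + 1 + k)‖) +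
        (3 * digitDev q g s + q * ‖1 - P s‖) := by
      rw [sum_range_succ', mul_sum, pow_zero, one_mul, add_zero]
      congr 1
      refine sum_congr rfl fun k _ => ?_
      rw [pow_succ, add_comm k 1, ← add_assoc]
      ring
    rw [hsum, ← Nat.div_add_mod' N q]
    refine (hg.norm_sum_range_sub_le_step hq hg1 (hP s) (Nat.mod_lt N (by omega))).trans ?_
    gcongr
    exact ih _ hM (s + 1)

end IsQMultiplicative

lemma tendsto_sum_pow_mul_div_pow {r : ℝ} (hr : 1 < r) {w : ℕ → ℝ}
    (hw : Tendsto w atTop (𝓝 0)) :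
    Tendsto (fun L => (∑ k ∈ range L, r ^ k * w k) / r ^ L) atTop (𝓝 0) := by
  have hpow : (fun k => r ^ k * w k) =o[atTop] fun k => r ^ k := by
    simpa using (Asymptotics.isBigO_refl (fun k => r ^ k) atTop).mul_isLittleO
      ((Asymptotics.isLittleO_one_iff ℝ).2 hw)
  have hdiv : Tendsto (fun L => ∑ k ∈ range L, r ^ k) atTop atTop := by
    refine tendsto_atTop_mono (fun L => ?_) tendsto_natCast_atTop_atTop
    simpa using card_nsmul_le_sum (range L) (fun k => r ^ k) 1 fun k _ => one_le_pow₀ hr.le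
  have hgeom : (fun L => ∑ k ∈ range L, r ^ k) =O[atTop] fun L => r ^ L := by
    refine Asymptotics.IsBigO.of_bound (r - 1)⁻¹ (Eventually.of_forall fun L => ?_)
    rw [geom_sum_eq hr.ne', Real.norm_of_nonneg, Real.norm_of_nonneg (by positivity),
      div_eq_mul_inv, mul_comm]
    · gcongr; linarith
    · exact div_nonneg (by linarith [one_le_pow₀ (n := L) hr.le]) (by linarith)
  exact ((hpow.sum_range (fun k => by positivity) hdiv).trans_isBigO hgeom).tendsto_div_nhds_zero

lemma Nat.tendsto_log_atTop {b : ℕ} (hb : 1 < b) : Tendsto (Nat.log b) atTop atTop :=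
  tendsto_atTop_atTop.2 fun n => ⟨b ^ n, fun _ hN => Nat.le_log_of_pow_le hb hN⟩

namespace IsQMultiplicative

variable {q : ℕ} {g : ℕ → ℂ}

lemma norm_sum_range_div_sub_le (hq : 2 ≤ q) (hg : IsQMultiplicative q g)
    (hg1 : ∀ n, ‖g n‖ ≤ 1) {P : ℕ → ℂ} (hP : ∀ s, P s = digitAvg q g s * P (s + 1))
    {N : ℕ} (hN : N ≠ 0) :
    ‖(∑ n ∈ range N, g n) / N - P 0‖ ≤
      q * ((∑ k ∈ range (Nat.log q N + 1), (q : ℝ) ^ k *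
          (3 * digitDev q g k + q * ‖1 - P k‖)) / q ^ (Nat.log q N + 1)) := by
  have hsum := hg.norm_sum_range_sub_le hq hg1 hP (Nat.log q N + 1) N
    (Nat.lt_pow_succ_log_self (by omega) N) 0
  simp only [pow_zero, mul_one, zero_add] at hsum
  have herr := le_of_add_le_of_nonneg_left hsum (by positivity)
  have hlog : (q : ℝ) ^ Nat.log q N ≤ N := by exact_mod_cast Nat.pow_log_le_self q hN
  have hq0 : (q : ℝ) ≠ 0 := by positivity
  calc ‖(∑ n ∈ range N, g n) / N - P 0‖ = ‖∑ n ∈ range N, g n - N * P 0‖ / N := by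
        rw [div_sub' (by exact_mod_cast hN), norm_div, Complex.norm_natCast, mul_comm]
    _ ≤ (∑ k ∈ range (Nat.log q N + 1), (q : ℝ) ^ k *
          (3 * digitDev q g k + q * ‖1 - P k‖)) / q ^ Nat.log q N :=
        div_le_div₀ ((norm_nonneg _).trans herr) herr (by positivity) hlog
    _ = _ := by rw [pow_succ]; field_simp

theorem tendsto_sum_range_div (hq : 2 ≤ q) (hg : IsQMultiplicative q g) (hg1 : ∀ n, ‖g n‖ ≤ 1)
    {P : ℕ → ℂ} (hP : ∀ s, P s = digitAvg q g s * P (s + 1)) (hP1 : Tendsto P atTop (𝓝 1))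
    (hdigit : ∀ d < q, Tendsto (fun j => g (d * q ^ j)) atTop (𝓝 1)) :
    Tendsto (fun N : ℕ => (∑ n ∈ range N, g n) / N) atTop (𝓝 (P 0)) := by
  have hdev : Tendsto (digitDev q g) atTop (𝓝 0) := by
    have h := tendsto_finsetSum (range q) fun d hd =>
      ((hdigit d (mem_range.1 hd)).sub_const 1).norm
    rwa [sub_self, norm_zero, sum_const_zero] at h
  have hw : Tendsto (fun k => 3 * digitDev q g k + q * ‖1 - P k‖) atTop (𝓝 0) := by
    simpa using (hdev.const_mul 3).add
      ((tendsto_const_nhds (x := (1 : ℂ)).sub hP1).norm.const_mul (q : ℝ))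
  rw [tendsto_iff_norm_sub_tendsto_zero]
  refine squeeze_zero' (Eventually.of_forall fun _ => norm_nonneg _)
    ((eventually_ne_atTop 0).mono fun N hN => hg.norm_sum_range_div_sub_le hq hg1 hP hN) ?_
  simpa using ((tendsto_sum_pow_mul_div_pow (by exact_mod_cast hq) hw).comp
    ((tendsto_add_atTop_nat 1).comp (Nat.tendsto_log_atTop hq))).const_mul (q : ℝ)

end IsQMultiplicative

lemma eq_mul_of_tendsto_prod_Ico {c P : ℕ → ℂ}
    (hP : ∀ s, Tendsto (fun J => ∏ j ∈ Ico s J, c j) atTop (𝓝 (P s))) (s : ℕ) :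
    P s = c s * P (s + 1) :=
  tendsto_nhds_unique (hP s) <| ((hP (s + 1)).const_mul (c s)).congr' <|
    (eventually_gt_atTop s).mono fun _ hJ => (prod_eq_prod_Ico_succ_bot hJ _).symm

lemma Complex.norm_log_sub_sub_one_le {c : ℂ} (hc : ‖c - 1‖ ≤ 1 / 2) :
    ‖Complex.log c - (c - 1)‖ ≤ ‖c - 1‖ ^ 2 := by
  have h := Complex.norm_log_one_add_sub_self_le (z := c - 1) (by linarith)
  rw [add_sub_cancel] at h
  refine h.trans ?_
  have hinv : (1 - ‖c - 1‖)⁻¹ ≤ 2 := by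
    rw [inv_le_comm₀ (by linarith) two_pos]; linarith
  nlinarith [sq_nonneg ‖c - 1‖]

theorem exists_tendsto_prod_Ico {c : ℕ → ℂ} {Z : ℂ}
    (hsum : Tendsto (fun J => ∑ j ∈ range J, (c j - 1)) atTop (𝓝 Z))
    (hsq : Summable fun j => ‖c j - 1‖ ^ 2) :
    ∃ P : ℕ → ℂ, (∀ s, Tendsto (fun J => ∏ j ∈ Ico s J, c j) atTop (𝓝 (P s))) ∧
      Tendsto P atTop (𝓝 1) := by
  obtain ⟨K, hK⟩ : ∃ K, ∀ j ≥ K, ‖c j - 1‖ ≤ 1 / 2 := by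
    refine eventually_atTop.1 ((hsq.tendsto_atTop_zero.eventually
      (gt_mem_nhds (by norm_num : (0 : ℝ) < 1 / 4))).mono fun j hj => ?_)
    nlinarith [norm_nonneg (c j - 1)]
  have hne : ∀ j ≥ K, c j ≠ 0 := fun j hj h0 => by
    have := hK j hj; rw [h0, zero_sub, norm_neg, norm_one] at this; norm_num at this
  set ℓ : ℕ → ℂ := fun J => ∑ j ∈ range J, Complex.log (c j)
  have hρ : Summable fun j => Complex.log (c j) - (c j - 1) :=
    hsq.of_norm_bounded_eventually_nat
      (eventually_atTop.2 ⟨K, fun j hj => Complex.norm_log_sub_sub_one_le (hK j hj)⟩)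
  set Λ := Z + ∑' j, (Complex.log (c j) - (c j - 1))
  have hℓ : Tendsto ℓ atTop (𝓝 Λ) := by
    simpa [ℓ, ← sum_add_distrib] using hsum.add hρ.hasSum.tendsto_sum_nat
  have htail : ∀ s ≥ K, Tendsto (fun J => ∏ j ∈ Ico s J, c j) atTop
      (𝓝 (Complex.exp (Λ - ℓ s))) := by
    intro s hs
    refine ((Complex.continuous_exp.tendsto _).comp (hℓ.sub_const (ℓ s))).congr' ?_
    filter_upwards [eventually_ge_atTop s] with J hJ
    rw [Function.comp_apply, ← sum_Ico_eq_sub _ hJ, Complex.exp_sum]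
    exact prod_congr rfl fun j hj => Complex.exp_log (hne j (hs.trans (mem_Ico.1 hj).1))
  -- from `K` on no factor vanishes and the tail products are `exp (Λ - ℓ s)`
  refine ⟨fun s => (∏ j ∈ Ico s K, c j) * Complex.exp (Λ - ℓ (max s K)), fun s => ?_, ?_⟩
  · have hIco : ∏ j ∈ Ico s (max s K), c j = ∏ j ∈ Ico s K, c j := by
      rcases le_total s K with h | h
      · rw [max_eq_right h]
      · rw [max_eq_left h, Ico_self, Ico_eq_empty_of_le h]
    refine ((htail _ (le_max_right s K)).const_mul _).congr' ?_
    filter_upwards [eventually_ge_atTop (max s K)] with J hJ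
    rw [← hIco, prod_Ico_consecutive _ (le_max_left s K) hJ]
  · have h0 : Tendsto (fun s => Complex.exp (Λ - ℓ s)) atTop (𝓝 1) := by
      have h := (Complex.continuous_exp.tendsto _).comp ((tendsto_const_nhds (x := Λ)).sub hℓ)
      rwa [sub_self, Complex.exp_zero] at h
    refine h0.congr' ?_
    filter_upwards [eventually_ge_atTop K] with s hs
    rw [max_eq_left hs, Ico_eq_empty_of_le hs, prod_empty, one_mul]

section digitSums

variable {q : ℕ} {f : ℕ → ℝ} {t : ℝ}

lemma summable_norm_digitAvg_charExp_sub_one_sq (hq : q ≠ 0)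
    (hB : Summable fun j => ∑ d ∈ range q, f (d * q ^ j) ^ 2) :
    Summable fun j => ‖digitAvg q (charExp f t) j - 1‖ ^ 2 := by
  refine ((hB.mul_left (q * t ^ 2))).of_nonneg_of_le (fun _ => sq_nonneg _) fun j => ?_
  calc ‖digitAvg q (charExp f t) j - 1‖ ^ 2 ≤ digitDev q (charExp f t) j ^ 2 :=
        pow_le_pow_left₀ (norm_nonneg _) (norm_digitAvg_sub_one_le hq j) 2
    _ ≤ q * ∑ d ∈ range q, ‖charExp f t (d * q ^ j) - 1‖ ^ 2 := by
        simpa [digitDev] using sq_sum_le_card_mul_sum_sq (s := range q)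
          (f := fun d => ‖charExp f t (d * q ^ j) - 1‖)
    _ ≤ q * t ^ 2 * ∑ d ∈ range q, f (d * q ^ j) ^ 2 := by
        rw [mul_assoc]
        gcongr q * ?_
        rw [mul_sum]
        gcongr with d
        refine (pow_le_pow_left₀ (norm_nonneg _) (norm_charExp_sub_one_le _) 2).trans_eq ?_
        rw [sq_abs, mul_pow]

lemma digitAvg_charExp_sub_one (hq : q ≠ 0) (j : ℕ) :
    digitAvg q (charExp f t) j - 1 =
      Complex.I * t / q * ((∑ d ∈ range q, f (d * q ^ j) : ℝ) : ℂ) +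
        (∑ d ∈ range q, (charExp f t (d * q ^ j) - 1 - Complex.I * t * f (d * q ^ j))) / q := by
  have hsplit : ∀ d, charExp f t (d * q ^ j) - 1 = Complex.I * t * f (d * q ^ j) +
      (charExp f t (d * q ^ j) - 1 - Complex.I * t * f (d * q ^ j)) := fun d => by ring
  rw [digitAvg_sub_one hq, sum_congr rfl fun d _ => hsplit d, sum_add_distrib, add_div,
    Complex.ofReal_sum, mul_sum, sum_div]
  congr 1
  exact sum_congr rfl fun d _ => by ring

lemma exists_tendsto_sum_digitAvg_charExp_sub_one (t : ℝ) (hq : q ≠ 0) {S : ℝ}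
    (hA : Tendsto (fun J => ∑ j ∈ range J, ∑ d ∈ range q, f (d * q ^ j)) atTop (𝓝 S))
    (hB : Summable fun j => ∑ d ∈ range q, f (d * q ^ j) ^ 2) :
    ∃ Z, Tendsto (fun J => ∑ j ∈ range J, (digitAvg q (charExp f t) j - 1)) atTop (𝓝 Z) := by
  set r : ℕ → ℂ := fun j =>
    (∑ d ∈ range q, (charExp f t (d * q ^ j) - 1 - Complex.I * t * f (d * q ^ j))) / q
  have hr : Summable r := by
    refine (hB.mul_left (2 * t ^ 2)).of_norm_bounded fun j => ?_
    rw [mul_sum]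
    exact (norm_sum_range_div_le hq _).trans
      (sum_le_sum fun d _ => (norm_charExp_sub_one_sub_le _).trans_eq (by ring))
  refine ⟨Complex.I * t / q * S + ∑' j, r j, ?_⟩
  simp_rw [digitAvg_charExp_sub_one hq, sum_add_distrib, ← mul_sum, ← Complex.ofReal_sum]
  exact (((Complex.continuous_ofReal.tendsto S).comp hA).const_mul _).add
    hr.hasSum.tendsto_sum_nat

end digitSums

lemma tendsto_charExp_digit {q : ℕ} {f : ℕ → ℝ} (t : ℝ)
    (hB : Summable fun j => ∑ d ∈ range q, f (d * q ^ j) ^ 2) {d : ℕ} (hd : d < q) :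
    Tendsto (fun j => charExp f t (d * q ^ j)) atTop (𝓝 1) := by
  have hsq : Tendsto (fun j => f (d * q ^ j) ^ 2) atTop (𝓝 0) :=
    (hB.of_nonneg_of_le (fun _ => sq_nonneg _) fun j =>
      single_le_sum (f := fun d => f (d * q ^ j) ^ 2) (fun _ _ => sq_nonneg _)
        (mem_range.2 hd)).tendsto_atTop_zero
  have habs : Tendsto (fun j => |t * f (d * q ^ j)|) atTop (𝓝 0) := by
    simpa [Real.sqrt_sq_eq_abs, abs_mul] using
      ((Real.continuous_sqrt.tendsto 0).comp hsq).const_mul |t|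
  rw [tendsto_iff_norm_sub_tendsto_zero]
  exact squeeze_zero (fun _ => norm_nonneg _) (fun j => norm_charExp_sub_one_le _) habs

/-- If the two series `∑_j ∑_{d=1}^{q-1} f(d q^j)` and `∑_j ∑_{d=1}^{q-1} f(d q^j)²`
converge, then for every real `t` the empirical characteristic functions converge to the
convergent infinite product `∏_{j≥0} ((1/q) ∑_{d=0}^{q-1} e^{i t f(d q^j)})`. -/
theorem q_ary_char_fun_limit (q : ℕ) (hq : 2 ≤ q) (f : ℕ → ℝ) (hf : IsQAdditive q f)
    (hS : ∃ S : ℝ, Tendsto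
      (fun J : ℕ => ∑ j ∈ Finset.range J, ∑ d ∈ Finset.Ico 1 q, f (d * q ^ j))
      atTop (𝓝 S))
    (hS2 : ∃ S2 : ℝ, Tendsto
      (fun J : ℕ => ∑ j ∈ Finset.range J, ∑ d ∈ Finset.Ico 1 q, f (d * q ^ j) ^ 2)
      atTop (𝓝 S2)) :
    ∀ t : ℝ, ∃ P : ℂ,
      Tendsto (fun J : ℕ => ∏ j ∈ Finset.range J,
          ((∑ d ∈ Finset.range q, Complex.exp (Complex.I * t * f (d * q ^ j))) / q))
        atTop (𝓝 P) ∧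
      Tendsto (fun N : ℕ => empCharFun f N t) atTop (𝓝 P) := by
  intro t
  obtain ⟨S, hS⟩ := hS
  obtain ⟨S2, hS2⟩ := hS2
  have hq0 : q ≠ 0 := by omega
  have hA : Tendsto (fun J => ∑ j ∈ range J, ∑ d ∈ range q, f (d * q ^ j)) atTop (𝓝 S) := by
    simpa [sum_range_eq_add_Ico _ (Nat.pos_of_ne_zero hq0), hf.map_zero] using hS
  have hB : Summable fun j => ∑ d ∈ range q, f (d * q ^ j) ^ 2 := by
    refine ((hasSum_iff_tendsto_nat_of_nonneg
      (fun j => sum_nonneg fun d _ => sq_nonneg _) S2).2 ?_).summable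
    simpa [sum_range_eq_add_Ico _ (Nat.pos_of_ne_zero hq0), hf.map_zero] using hS2
  obtain ⟨Z, hZ⟩ := exists_tendsto_sum_digitAvg_charExp_sub_one t hq0 hA hB
  obtain ⟨P, hP, hP1⟩ :=
    exists_tendsto_prod_Ico hZ (summable_norm_digitAvg_charExp_sub_one_sq hq0 hB)
  have hprod : Tendsto (fun J => ∏ j ∈ range J, digitAvg q (charExp f t) j) atTop (𝓝 (P 0)) := by
    simpa only [range_eq_Ico] using hP 0
  refine ⟨P 0, hprod, ?_⟩
  exact (hf.isQMultiplicative_charExp hq t).tendsto_sum_range_div hq (fun n => (norm_charExp n).le)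
    (eq_mul_of_tendsto_prod_Ico hP) hP1 fun d hd => tendsto_charExp_digit t hB hd
end

section
/- Let q ≥ 2 be an integer and let f be a real-valued q-additive function such that both series ∑_{j≥0} ∑_{d=1}^{q-1} f(d·q^j) and ∑_{j≥0} ∑_{d=1}^{q-1} f(d·q^j)² converge, and let φ(t) = ∏_{j≥0} ( (1/q) ∑_{d=0}^{q-1} e^{i t f(d q^j)} ). Then for every real t ≠ 0, |φ(t)| ≤ exp( −(2/(π²q²))·t²·∑_{(d,j)∈S(t)} f(d q^j)² ), where S(t) = {(d,j) : 1 ≤ d ≤ q−1, j ≥ 0, |f(d q^j)| ≤ π/|t|}. -/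
/-!
The `j`-th factor is the mean of the unit vectors `e^{iθ_d}`, `θ_d = t f(d q^j)`, `0 ≤ d < q`,
and the `d = 0` term is `1` because `f 0 = 0`. Writing the sum as `1 + W` with `|W| ≤ q - 1`,
`|1 + W|² ≤ q² - 2 ∑_{d ≥ 1} (1 - cos θ_d)`, and `1 - cos θ ≥ 2θ²/π²` for `|θ| ≤ π`. Hence the
squared modulus of the factor is at most `1 - y ≤ e^{-y}` with `y = (4/(π²q²)) ∑_{|θ_d| ≤ π} θ_d²`.
Multiplying these bounds and letting the number of factors tend to infinity gives the claim; the
exponents are summable because they are dominated by `t² ∑_d f(d q^j)²`.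
-/

open Filter Finset Topology

lemma Real.le_exp_neg_half_of_sq_le_one_sub {x y : ℝ} (hx : 0 ≤ x) (h : x ^ 2 ≤ 1 - y) :
    x ≤ Real.exp (-y / 2) :=
  calc x = √(x ^ 2) := (Real.sqrt_sq hx).symm
    _ ≤ √(Real.exp (-y)) := Real.sqrt_le_sqrt (h.trans (Real.one_sub_le_exp_neg y))
    _ = Real.exp (-y / 2) := (Real.exp_half _).symm

lemma Complex.norm_one_add_sum_exp_sq_le {ι : Type*} (s : Finset ι) (θ : ι → ℝ) :
    ‖1 + ∑ d ∈ s, Complex.exp (θ d * Complex.I)‖ ^ 2 ≤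
      (1 + #s) ^ 2 - 4 / Real.pi ^ 2 * ∑ d ∈ s, if |θ d| ≤ Real.pi then θ d ^ 2 else 0 := by
  set W := ∑ d ∈ s, Complex.exp (θ d * Complex.I)
  have hW : ‖W‖ ^ 2 ≤ (#s : ℝ) ^ 2 := by
    gcongr
    exact (norm_sum_le _ _).trans (by simp)
  have hre : 2 / Real.pi ^ 2 * (∑ d ∈ s, if |θ d| ≤ Real.pi then θ d ^ 2 else 0) ≤ #s - W.re := by
    simp only [W, Complex.re_sum, Complex.exp_ofReal_mul_I_re, mul_sum, card_eq_sum_ones,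
      Nat.cast_sum, Nat.cast_one, ← sum_sub_distrib]
    refine sum_le_sum fun d _ => ?_
    split_ifs with h
    · linarith [Real.cos_le_one_sub_mul_cos_sq h]
    · linarith [Real.cos_le_one (θ d)]
  rw [Complex.sq_norm, Complex.normSq_add, Complex.normSq_one, ← Complex.sq_norm, one_mul,
    Complex.conj_re]
  linear_combination hW + 2 * hre

lemma norm_mean_exp_le (q : ℕ) (hq : 1 ≤ q) (θ : ℕ → ℝ) (hθ : θ 0 = 0) :
    ‖(∑ d ∈ range q, Complex.exp (θ d * Complex.I)) / q‖ ≤ Real.exp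
      (-(2 / (Real.pi ^ 2 * q ^ 2)) * ∑ d ∈ Ico 1 q, if |θ d| ≤ Real.pi then θ d ^ 2 else 0) := by
  have key := Complex.norm_one_add_sum_exp_sq_le (Ico 1 q) θ
  set X := ∑ d ∈ Ico 1 q, if |θ d| ≤ Real.pi then θ d ^ 2 else 0
  rw [Nat.card_Ico, Nat.cast_sub hq, Nat.cast_one, add_sub_cancel] at key
  rw [range_eq_Ico, sum_eq_sum_Ico_succ_bot hq, hθ, Complex.ofReal_zero, zero_mul,
    Complex.exp_zero]
  refine (Real.le_exp_neg_half_of_sq_le_one_sub (y := 4 / (Real.pi ^ 2 * q ^ 2) * X)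
    (norm_nonneg _) ?_).trans_eq (by ring_nf)
  have hq' : (0 : ℝ) < q := by exact_mod_cast hq
  rw [norm_div, Complex.norm_natCast, div_pow, div_le_iff₀ (by positivity)]
  refine key.trans_eq ?_
  field_simp

lemma ite_abs_mul_le_sq_eq {t : ℝ} (ht : t ≠ 0) (a x : ℝ) :
    (if |t * x| ≤ a then (t * x) ^ 2 else 0) = t ^ 2 * if |x| ≤ a / |t| then x ^ 2 else 0 := by
  have hiff : |t * x| ≤ a ↔ |x| ≤ a / |t| := by
    rw [le_div_iff₀ (abs_pos.2 ht), abs_mul, mul_comm]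
  simp only [hiff]
  split_ifs <;> ring

lemma norm_le_exp_neg_tsum_of_tendsto_prod {𝕜 : Type*} [NormedField 𝕜] {z : ℕ → 𝕜}
    {u : ℕ → ℝ} {P : 𝕜} (hu : Summable u) (hz : ∀ j, ‖z j‖ ≤ Real.exp (-u j))
    (hP : Tendsto (fun J => ∏ j ∈ range J, z j) atTop (𝓝 P)) :
    ‖P‖ ≤ Real.exp (-∑' j, u j) :=
  le_of_tendsto_of_tendsto' hP.norm hu.hasSum.tendsto_sum_nat.neg.rexp fun J => by
    rw [norm_prod, ← sum_neg_distrib, Real.exp_sum]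
    exact prod_le_prod (fun _ _ => norm_nonneg _) fun j _ => hz j

theorem char_fun_bound_general (q : ℕ) (hq : 2 ≤ q) (f : ℕ → ℝ) (hf : IsQAdditive q f)
    (hS2 : ∃ S2 : ℝ, Tendsto
      (fun J : ℕ => ∑ j ∈ Finset.range J, ∑ d ∈ Finset.Ico 1 q, f (d * q ^ j) ^ 2)
      atTop (𝓝 S2))
    (t : ℝ) (ht : t ≠ 0) (P : ℂ)
    (hP : Tendsto (fun J : ℕ => ∏ j ∈ Finset.range J,
        ((∑ d ∈ Finset.range q, Complex.exp (Complex.I * t * f (d * q ^ j))) / q))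
      atTop (𝓝 P)) :
    ‖P‖ ≤
      Real.exp (-(2 / (Real.pi ^ 2 * q ^ 2)) * t ^ 2 *
        ∑' j : ℕ, ∑ d ∈ Finset.Ico 1 q,
          (if |f (d * q ^ j)| ≤ Real.pi / |t| then f (d * q ^ j) ^ 2 else 0)) := by
  obtain ⟨S2, hS2⟩ := hS2
  set u : ℕ → ℝ := fun j => ∑ d ∈ Ico 1 q,
    if |f (d * q ^ j)| ≤ Real.pi / |t| then f (d * q ^ j) ^ 2 else 0
  have hsq : Summable fun j => ∑ d ∈ Ico 1 q, f (d * q ^ j) ^ 2 :=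
    ((hasSum_iff_tendsto_nat_of_nonneg (fun j => sum_nonneg fun d _ => sq_nonneg _) S2).2
      hS2).summable
  have hu : Summable u := hsq.of_nonneg_of_le (fun j => sum_nonneg fun d _ => by positivity)
    fun j => sum_le_sum fun d _ => by split_ifs <;> [exact le_rfl; positivity]
  have hf0 : f 0 = 0 := by simpa using hf 0
  have hfactor (j : ℕ) : ‖(∑ d ∈ range q, Complex.exp (Complex.I * t * f (d * q ^ j))) / q‖ ≤
      Real.exp (-(2 / (Real.pi ^ 2 * q ^ 2) * t ^ 2 * u j)) := by
    have h := norm_mean_exp_le q (by omega) (fun d => t * f (d * q ^ j)) (by simp [hf0])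
    simp only [ite_abs_mul_le_sq_eq ht, ← mul_sum, Complex.ofReal_mul, mul_comm _ Complex.I,
      ← mul_assoc] at h
    exact h.trans_eq (by simp only [u, neg_mul])
  have h := norm_le_exp_neg_tsum_of_tendsto_prod (hu.mul_left _) hfactor hP
  rwa [tsum_mul_left, ← neg_mul, ← neg_mul] at h

/-- **Upper bound for the limiting characteristic function.**
If the two series converge and `P` is the value of the convergent infinite product
`∏_{j≥0} ((1/q) ∑_{d=0}^{q-1} e^{i t f(d q^j)})`, then
`|P| ≤ exp(−(2/(π²q²)) t² ∑_{(d,j)∈S(t)} f(d q^j)²)` where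
`S(t) = {(d,j) : 1 ≤ d ≤ q−1, |f(d q^j)| ≤ π/|t|}`. -/
theorem char_fun_bound (q : ℕ) (hq : 2 ≤ q) (f : ℕ → ℝ) (hf : IsQAdditive q f)
    (hS : ∃ S : ℝ, Tendsto
      (fun J : ℕ => ∑ j ∈ Finset.range J, ∑ d ∈ Finset.Ico 1 q, f (d * q ^ j))
      atTop (𝓝 S))
    (hS2 : ∃ S2 : ℝ, Tendsto
      (fun J : ℕ => ∑ j ∈ Finset.range J, ∑ d ∈ Finset.Ico 1 q, f (d * q ^ j) ^ 2)
      atTop (𝓝 S2))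
    (t : ℝ) (ht : t ≠ 0) (P : ℂ)
    (hP : Tendsto (fun J : ℕ => ∏ j ∈ Finset.range J,
        ((∑ d ∈ Finset.range q, Complex.exp (Complex.I * t * f (d * q ^ j))) / q))
      atTop (𝓝 P)) :
    ‖P‖ ≤
      Real.exp (-(2 / (Real.pi ^ 2 * q ^ 2)) * t ^ 2 *
        ∑' j : ℕ, ∑ d ∈ Finset.Ico 1 q,
          (if |f (d * q ^ j)| ≤ Real.pi / |t| then f (d * q ^ j) ^ 2 else 0)) :=
  char_fun_bound_general q hq f hf hS2 t ht P hP
end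

section
/- Let B > 1 be a real number and for an integer J ≥ 0 set S_J(τ) = (1/2) ∑_{j=0}^{J} ‖τ·B^j/π‖², where ‖x‖ denotes the distance from x to the nearest integer. Then there exist constants η > 0 and C > 0 (depending on B) such that for all J ≥ 0, ∫₁^B exp(−S_J(τ)) dτ ≤ C·exp(−η·J). -/
open Filter Finset Topology

/-- Distance from a real number to the nearest integer. -/
noncomputable def nearestIntDist (x : ℝ) : ℝ := |x - round x|

/-!
Keep only every `m`-th term of the sum, with `B ^ m ≥ 12`, so that the frequencies
`λ_k = B ^ (m k) / π` are lacunary with ratio at least `1 / δ`, `δ = 1 / 12`. Pointwise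
`exp (-‖x‖² / 2) ≤ q + (1 - q) 1[‖x‖ < δ]` with `q = exp (-δ² / 2)`, and expanding the product of
these bounds over `k` leaves the measures of the sets where `‖τ λ_k‖ < δ` for all `k` in a set `t`.
For lacunary frequencies these events are almost independent: the smallest frequency `λ` confines
`τ` to at most `(b - a) λ + 2` intervals of length `2δ / λ`, each long on the scale of the remaining
frequencies, so by induction the measure is at most `(6δ) ^ |t|` times `b - a + 1 / λ_min`.
Summing over `t`, the integral is at most a constant times `(q + 6δ (1 - q)) ^ (J / m + 1)`.
-/

open MeasureTheory Set

lemma measurable_nearestIntDist : Measurable nearestIntDist := by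
  have h_round : Measurable fun x : ℝ => ((round x : ℤ) : ℝ) := by
    simp only [round_eq]
    exact measurable_from_top.comp (Int.measurable_floor.comp (measurable_id.add_const _))
  exact (measurable_id.sub h_round).abs

lemma Icc_inter_nearestIntDist_lt_subset {a b l δ : ℝ} (hl : 0 < l) :
    Icc a b ∩ {τ | nearestIntDist (τ * l) < δ} ⊆
      ⋃ i ∈ Finset.Icc ⌈a * l - δ⌉ ⌊b * l + δ⌋, Icc ((i - δ) / l) ((i + δ) / l) := by
  rintro τ ⟨⟨haτ, hτb⟩, hτ⟩
  obtain ⟨hlo, hhi⟩ := abs_lt.mp (show |τ * l - round (τ * l)| < δ from hτ)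
  have hal : a * l ≤ τ * l := mul_le_mul_of_nonneg_right haτ hl.le
  have hbl : τ * l ≤ b * l := mul_le_mul_of_nonneg_right hτb hl.le
  refine mem_biUnion (x := round (τ * l)) ?_ ⟨?_, ?_⟩
  · rw [Finset.mem_coe, Finset.mem_Icc, Int.ceil_le, Int.le_floor]
    constructor <;> linarith
  · rw [div_le_iff₀ hl]; linarith
  · rw [le_div_iff₀ hl]; linarith

lemma card_Icc_ceil_floor_le {K : Type*} [CommRing K] [LinearOrder K] [IsStrictOrderedRing K]
    [FloorRing K] {x y : K} (h : x ≤ y + 1) :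
    ((Finset.Icc ⌈x⌉ ⌊y⌋).card : K) ≤ y - x + 1 := by
  rw [Int.card_Icc, ← Int.cast_natCast, Int.toNat_eq_max]
  push_cast
  refine max_le ?_ (by linarith)
  linarith [Int.floor_le y, Int.le_ceil x]

lemma volume_Icc_inter_nearestIntDist_lt_inter_le {a b l δ M : ℝ} (hl : 0 < l) (hδ : 0 ≤ δ)
    (hδ_half : δ ≤ 1 / 2) (hab : a ≤ b) (hM : 0 ≤ M) (S : Set ℝ)
    (hS : ∀ i : ℤ, volume (Icc ((i - δ) / l) ((i + δ) / l) ∩ S) ≤ ENNReal.ofReal M) :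
    volume (Icc a b ∩ {τ | nearestIntDist (τ * l) < δ} ∩ S) ≤
      ENNReal.ofReal (((b - a) * l + 2) * M) := by
  set F := Finset.Icc ⌈a * l - δ⌉ ⌊b * l + δ⌋
  have hcover : Icc a b ∩ {τ | nearestIntDist (τ * l) < δ} ∩ S ⊆
      ⋃ i ∈ F, Icc ((i - δ) / l) ((i + δ) / l) ∩ S := by
    rw [← iUnion₂_inter]
    exact inter_subset_inter_left _ (Icc_inter_nearestIntDist_lt_subset hl)
  have hcard : (#F : ℝ) ≤ (b - a) * l + 2 := by
    have := card_Icc_ceil_floor_le (x := a * l - δ) (y := b * l + δ)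
      (by nlinarith [mul_le_mul_of_nonneg_right hab hl.le])
    linarith
  calc volume (Icc a b ∩ {τ | nearestIntDist (τ * l) < δ} ∩ S)
      ≤ ∑ i ∈ F, ENNReal.ofReal M :=
        (measure_mono hcover).trans ((measure_biUnion_finset_le _ _).trans
          (Finset.sum_le_sum fun i _ => hS i))
    _ = ENNReal.ofReal (#F * M) := by
        rw [Finset.sum_const, nsmul_eq_mul, ENNReal.ofReal_mul (Nat.cast_nonneg _),
          ENNReal.ofReal_natCast]
    _ ≤ ENNReal.ofReal (((b - a) * l + 2) * M) := by gcongr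

theorem volume_Icc_inter_nearestIntDist_lt_le {δ R l₀ : ℝ} {l : ℕ → ℝ} (hδ : 0 < δ)
    (hδ_half : δ ≤ 1 / 2) (hδR : 1 ≤ δ * R) (hl₀ : 0 < l₀) (A : Finset ℕ)
    (hA_ge : ∀ k ∈ A, l₀ ≤ l k) (hA_lac : ∀ k ∈ A, ∀ k' ∈ A, k < k' → R * l k ≤ l k')
    {a b : ℝ} (hab : a ≤ b) :
    volume (Icc a b ∩ ⋂ k ∈ A, {τ | nearestIntDist (τ * l k) < δ}) ≤
      ENNReal.ofReal ((6 * δ) ^ #A * (b - a + 1 / l₀)) := by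
  induction A using Finset.induction_on_min generalizing l₀ a b with
  | empty =>
    simp only [Finset.notMem_empty, iInter_of_empty, iInter_univ, inter_univ, Finset.card_empty,
      pow_zero, one_mul, Real.volume_Icc]
    exact ENNReal.ofReal_le_ofReal (by linarith [one_div_pos.mpr hl₀])
  | insert k A hkA ih =>
    have hR : 0 < R := pos_of_mul_pos_right (by linarith) hδ.le
    have hlk₀ : l₀ ≤ l k := hA_ge k (Finset.mem_insert_self k A)
    have hlk : 0 < l k := hl₀.trans_le hlk₀
    have hpiece (i : ℤ) : volume (Icc ((i - δ) / l k) ((i + δ) / l k) ∩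
        ⋂ j ∈ A, {τ | nearestIntDist (τ * l j) < δ}) ≤
          ENNReal.ofReal ((6 * δ) ^ #A * ((2 * δ + 1 / R) / l k)) := by
      convert ih (l₀ := R * l k) (by positivity)
        (fun j hj => hA_lac k (Finset.mem_insert_self k A) j (Finset.mem_insert_of_mem hj)
          (hkA j hj))
        (fun j hj j' hj' =>
          hA_lac j (Finset.mem_insert_of_mem hj) j' (Finset.mem_insert_of_mem hj'))
        (a := (i - δ) / l k) (b := (i + δ) / l k)
        (div_le_div_of_nonneg_right (by linarith) hlk.le) using 3
      field_simp
      ring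
    rw [Finset.set_biInter_insert, ← Set.inter_assoc,
      Finset.card_insert_of_notMem fun h => lt_irrefl k (hkA k h)]
    refine (volume_Icc_inter_nearestIntDist_lt_inter_le hlk hδ.le hδ_half hab (by positivity) _
      hpiece).trans (ENNReal.ofReal_le_ofReal ?_)
    have h_inv_R : 1 / R ≤ δ := by rw [div_le_iff₀ hR]; linarith
    have h_inv_l : 1 / l k ≤ 1 / l₀ := one_div_le_one_div_of_le hl₀ hlk₀
    calc ((b - a) * l k + 2) * ((6 * δ) ^ #A * ((2 * δ + 1 / R) / l k))
        ≤ ((b - a) * l k + 2) * ((6 * δ) ^ #A * (3 * δ / l k)) := by gcongr; linarith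
      _ = (6 * δ) ^ #A * (3 * δ * (b - a) + 6 * δ * (1 / l k)) := by field_simp; ring
      _ ≤ (6 * δ) ^ #A * (6 * δ * (b - a + 1 / l₀)) := by gcongr; nlinarith
      _ = (6 * δ) ^ (#A + 1) * (b - a + 1 / l₀) := by ring

lemma volume_Icc_inter_nearestIntDist_geometric_lt_le {δ R c a b : ℝ} (hδ : 0 < δ)
    (hδ_half : δ ≤ 1 / 2) (hδR : 1 ≤ δ * R) (hc : 0 < c) (hab : a ≤ b) (t : Finset ℕ) :
    volume (Icc a b ∩ ⋂ k ∈ t, {τ | nearestIntDist (τ * (R ^ k / c)) < δ}) ≤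
      ENNReal.ofReal ((6 * δ) ^ #t * (b - a + c)) := by
  have hR : 1 ≤ R := by nlinarith
  have h := volume_Icc_inter_nearestIntDist_lt_le hδ hδ_half hδR (one_div_pos.2 hc) t
    (l := fun k => R ^ k / c) (fun k _ => div_le_div_of_nonneg_right (one_le_pow₀ hR) hc.le)
    (fun k _ k' _ hkk' => by
      rw [← mul_div_assoc, ← pow_succ']
      exact div_le_div_of_nonneg_right (pow_le_pow_right₀ hR hkk') hc.le) hab
  rwa [one_div_one_div] at h

lemma prod_add_indicator_eq_sum {α ι : Type*} (s : Finset ι) (E : ι → Set α) (q : ℝ) (x : α) :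
    ∏ i ∈ s, (q + (1 - q) * (E i).indicator 1 x) =
      ∑ t ∈ s.powerset, (1 - q) ^ #t * q ^ (#s - #t) * (⋂ i ∈ t, E i).indicator 1 x := by
  classical
  simp_rw [add_comm q, Finset.prod_add, Finset.prod_mul_distrib, Finset.prod_const]
  refine Finset.sum_congr rfl fun t ht => ?_
  rw [Finset.card_sdiff_of_subset (Finset.mem_powerset.1 ht)]
  simp only [Set.indicator_apply, Pi.one_apply, Finset.prod_boole, mem_iInter₂]
  ring

theorem integral_le_of_le_prod_indicator {α ι : Type*} [MeasurableSpace α] {μ : Measure α}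
    {s : Finset ι} {E : ι → Set α} (hE : ∀ i ∈ s, MeasurableSet (E i)) {q c K : ℝ}
    (hq₀ : 0 ≤ q) (hq₁ : q ≤ 1) (hc : 0 ≤ c) (hK : 0 ≤ K)
    (hμ : ∀ t ⊆ s, μ (⋂ i ∈ t, E i) ≤ ENNReal.ofReal (c ^ #t * K))
    {f : α → ℝ} (hf₀ : 0 ≤ f) (hf : ∀ x, f x ≤ ∏ i ∈ s, (q + (1 - q) * (E i).indicator 1 x)) :
    ∫ x, f x ∂μ ≤ K * (q + (1 - q) * c) ^ #s := by
  have hmeas : ∀ t ∈ s.powerset, MeasurableSet (⋂ i ∈ t, E i) := fun t ht =>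
    Finset.measurableSet_biInter t fun i hi => hE i (Finset.mem_powerset.1 ht hi)
  have hint : ∀ t ∈ s.powerset, Integrable (fun x => (1 - q) ^ #t * q ^ (#s - #t) *
      (⋂ i ∈ t, E i).indicator 1 x) μ := fun t ht =>
    ((integrable_indicator_iff (hmeas t ht)).2 (integrableOn_const
      ((hμ t (Finset.mem_powerset.1 ht)).trans_lt ENNReal.ofReal_lt_top).ne)).const_mul _
  calc ∫ x, f x ∂μ
      ≤ ∫ x, ∑ t ∈ s.powerset, (1 - q) ^ #t * q ^ (#s - #t) * (⋂ i ∈ t, E i).indicator 1 x ∂μ :=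
        integral_mono_of_nonneg (Eventually.of_forall hf₀) (integrable_finsetSum _ hint)
          (Eventually.of_forall fun x => (hf x).trans_eq (prod_add_indicator_eq_sum s E q x))
    _ = ∑ t ∈ s.powerset, (1 - q) ^ #t * q ^ (#s - #t) * μ.real (⋂ i ∈ t, E i) := by
        rw [integral_finsetSum _ hint]
        refine Finset.sum_congr rfl fun t ht => ?_
        rw [integral_const_mul, integral_indicator_one (hmeas t ht)]
    _ ≤ ∑ t ∈ s.powerset, (1 - q) ^ #t * q ^ (#s - #t) * (c ^ #t * K) := by
        gcongr with t ht
        exact ENNReal.toReal_le_of_le_ofReal (by positivity) (hμ t (Finset.mem_powerset.1 ht))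
    _ = K * (q + (1 - q) * c) ^ #s := by
        rw [add_comm, ← Finset.sum_pow_mul_eq_add_pow, Finset.mul_sum]
        refine Finset.sum_congr rfl fun t _ => ?_
        rw [mul_pow]
        ring

lemma exp_neg_half_sq_nearestIntDist_le {δ : ℝ} (hδ : 0 ≤ δ) (x : ℝ) :
    Real.exp (-(1 / 2 * nearestIntDist x ^ 2)) ≤ Real.exp (-(1 / 2 * δ ^ 2)) +
      (1 - Real.exp (-(1 / 2 * δ ^ 2))) * {y | nearestIntDist y < δ}.indicator 1 x := by
  by_cases hx : nearestIntDist x < δ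
  · rw [Set.indicator_of_mem (s := {y | nearestIntDist y < δ}) hx, Pi.one_apply, mul_one,
      add_sub_cancel, Real.exp_le_one_iff]
    have := sq_nonneg (nearestIntDist x)
    linarith
  · rw [Set.indicator_of_notMem (s := {y | nearestIntDist y < δ}) hx, mul_zero, add_zero,
      Real.exp_le_exp]
    have := pow_le_pow_left₀ hδ (not_lt.1 hx) 2
    linarith

lemma sum_range_div_add_one_mul_le {g : ℕ → ℝ} (hg : 0 ≤ g) {m : ℕ} (hm : 0 < m) (J : ℕ) :
    ∑ k ∈ range (J / m + 1), g (m * k) ≤ ∑ j ∈ range (J + 1), g j := by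
  rw [← Finset.sum_image fun _ _ _ _ h => Nat.eq_of_mul_eq_mul_left hm h]
  refine Finset.sum_le_sum_of_subset_of_nonneg ?_ fun j _ _ => hg j
  intro j hj
  obtain ⟨k, hk, rfl⟩ := Finset.mem_image.1 hj
  rw [Finset.mem_range, Nat.lt_succ_iff] at hk ⊢
  exact (Nat.mul_le_mul_left m hk).trans (Nat.mul_div_le J m)

lemma exp_neg_half_sum_sq_le_prod {δ : ℝ} (hδ : 0 ≤ δ) {m : ℕ} (hm : 0 < m) (J : ℕ)
    (x : ℕ → ℝ) :
    Real.exp (-(1 / 2 * ∑ j ∈ range (J + 1), nearestIntDist (x j) ^ 2)) ≤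
      ∏ k ∈ range (J / m + 1), (Real.exp (-(1 / 2 * δ ^ 2)) +
        (1 - Real.exp (-(1 / 2 * δ ^ 2))) * {y | nearestIntDist y < δ}.indicator 1 (x (m * k))) :=
  calc Real.exp (-(1 / 2 * ∑ j ∈ range (J + 1), nearestIntDist (x j) ^ 2))
      ≤ Real.exp (-(1 / 2 * ∑ k ∈ range (J / m + 1), nearestIntDist (x (m * k)) ^ 2)) := by
        gcongr
        exact sum_range_div_add_one_mul_le (g := fun j => nearestIntDist (x j) ^ 2)
          (fun j => sq_nonneg _) hm J
    _ = ∏ k ∈ range (J / m + 1), Real.exp (-(1 / 2 * nearestIntDist (x (m * k)) ^ 2)) := by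
        rw [← Real.exp_sum, Finset.mul_sum, ← Finset.sum_neg_distrib]
    _ ≤ _ := Finset.prod_le_prod (fun _ _ => (Real.exp_pos _).le)
        fun k _ => exp_neg_half_sq_nearestIntDist_le hδ _

lemma pow_div_add_one_le_exp {ρ : ℝ} (hρ₀ : 0 < ρ) (hρ₁ : ρ ≤ 1) {m : ℕ} (hm : 0 < m)
    (J : ℕ) : ρ ^ (J / m + 1) ≤ Real.exp (-(-Real.log ρ / m) * J) := by
  have hJ : (J : ℝ) ≤ m * (J / m + 1 : ℕ) := by exact_mod_cast (Nat.lt_mul_div_succ J hm).le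
  rw [← Real.exp_log hρ₀, ← Real.exp_nat_mul, Real.exp_log hρ₀, Real.exp_le_exp]
  have hlog : Real.log ρ ≤ 0 := Real.log_nonpos hρ₀.le hρ₁
  rw [neg_div, neg_neg, div_mul_eq_mul_div, le_div_iff₀ (by exact_mod_cast hm)]
  nlinarith

theorem setIntegral_exp_neg_half_sum_nearestIntDist_sq_le {δ R c a b : ℝ} {m : ℕ} (hδ : 0 < δ)
    (hδ_half : δ ≤ 1 / 2) (hδR : 1 ≤ δ * R ^ m) (hm : 0 < m) (hc : 0 < c) (hab : a ≤ b) (J : ℕ) :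
    ∫ τ in Ioc a b, Real.exp (-(1 / 2 * ∑ j ∈ range (J + 1), nearestIntDist (τ * (R ^ j / c)) ^ 2))
      ≤ (b - a + c) * (Real.exp (-(1 / 2 * δ ^ 2)) +
          (1 - Real.exp (-(1 / 2 * δ ^ 2))) * (6 * δ)) ^ (J / m + 1) := by
  set E : ℕ → Set ℝ := fun k => {τ | nearestIntDist (τ * ((R ^ m) ^ k / c)) < δ}
  have hE : ∀ k ∈ range (J / m + 1), MeasurableSet (E k) := fun k _ =>
    measurableSet_lt (measurable_nearestIntDist.comp (measurable_id.mul_const _)) measurable_const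
  have hvol : ∀ t ⊆ range (J / m + 1), volume.restrict (Ioc a b) (⋂ k ∈ t, E k) ≤
      ENNReal.ofReal ((6 * δ) ^ #t * (b - a + c)) := fun t _ => by
    rw [Measure.restrict_apply' measurableSet_Ioc, Set.inter_comm]
    exact (measure_mono (inter_subset_inter_left _ Set.Ioc_subset_Icc_self)).trans
      (volume_Icc_inter_nearestIntDist_geometric_lt_le hδ hδ_half hδR hc hab t)
  have hf : ∀ τ, Real.exp (-(1 / 2 * ∑ j ∈ range (J + 1), nearestIntDist (τ * (R ^ j / c)) ^ 2))
      ≤ ∏ k ∈ range (J / m + 1), (Real.exp (-(1 / 2 * δ ^ 2)) +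
          (1 - Real.exp (-(1 / 2 * δ ^ 2))) * (E k).indicator 1 τ) := fun τ => by
    have h := exp_neg_half_sum_sq_le_prod hδ.le hm J fun j => τ * (R ^ j / c)
    simp only [pow_mul] at h
    exact h
  rw [← card_range (J / m + 1)]
  exact integral_le_of_le_prod_indicator hE (Real.exp_pos _).le
    (Real.exp_le_one_iff.2 (by nlinarith)) (by positivity) (by linarith) hvol
    (fun τ => (Real.exp_pos _).le) hf

/-- **Key exponential-decay lemma.** For `B > 1` and
`S_J(τ) = (1/2) ∑_{j=0}^{J} ‖τ B^j/π‖²`, there are `η > 0` and `C > 0` with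
`∫₁^B exp(−S_J(τ)) dτ ≤ C e^{−ηJ}` for all `J ≥ 0`. -/
theorem exp_decay_integral (B : ℝ) (hB : 1 < B) :
    ∃ η C : ℝ, 0 < η ∧ 0 < C ∧ ∀ J : ℕ,
      (∫ τ in (1:ℝ)..B, Real.exp (-((1 / 2) *
          ∑ j ∈ Finset.range (J + 1), nearestIntDist (τ * B ^ j / Real.pi) ^ 2))) ≤
        C * Real.exp (-η * J) := by
  obtain ⟨m, hm⟩ := pow_unbounded_of_one_lt (12 : ℝ) hB
  have hm₀ : 0 < m := Nat.pos_of_ne_zero (by rintro rfl; norm_num at hm)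
  set δ : ℝ := 1 / 12
  set q := Real.exp (-(1 / 2 * δ ^ 2))
  have hq₀ : 0 < q := Real.exp_pos _
  have hq₁ : q < 1 := Real.exp_lt_one_iff.2 (by norm_num [δ])
  set ρ := q + (1 - q) * (6 * δ)
  have hρ₀ : 0 < ρ := by norm_num [ρ, δ]; linarith
  have hρ₁ : ρ < 1 := by norm_num [ρ, δ]; linarith
  refine ⟨-Real.log ρ / m, B - 1 + Real.pi, div_pos (neg_pos.2 (Real.log_neg hρ₀ hρ₁))
    (by exact_mod_cast hm₀), by linarith [Real.pi_pos], fun J => ?_⟩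
  simp only [mul_div_assoc]
  rw [intervalIntegral.integral_of_le hB.le]
  calc _ ≤ (B - 1 + Real.pi) * ρ ^ (J / m + 1) :=
        setIntegral_exp_neg_half_sum_nearestIntDist_sq_le (by norm_num [δ]) (by norm_num [δ])
          (by norm_num [δ]; linarith) hm₀ Real.pi_pos hB.le J
    _ ≤ _ := by
        gcongr
        exact pow_div_add_one_le_exp hρ₀ hρ₁.le hm₀ J
end

section
/- Let f be a real-valued Z-additive function such that both series ∑_{j≥2} f(F_j) and ∑_{j≥2} f(F_j)² converge. Then (1/N) ∑_{n<N} |f(n)| = O(1) as N → ∞; that is, there exists a constant C (depending on f) such that ∑_{n<N} |f(n)| ≤ C·N for all N ≥ 1. -/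
/-!
Split `[0, F_{K+3})` into `[0, F_{K+2})` and `F_{K+2} + [0, F_{K+1})`; by Z-additivity `f` is
`f(F_{K+2}) + f(m)` on the second block. Write `μ_K` for the mean of `f` on `[0, F_K)` and `D_K`
for the sum of squared deviations from it. The law of total variance gives
`D_{K+3} ≤ D_{K+2} + D_{K+1} + F_{K+1} d_K²`, where `d_K` is the difference of the means of the two
blocks, and `d_{K+1} = f(F_{K+3}) - (F_{K+1} / F_{K+3}) d_K` with a factor at most `1/2`; hence
`∑ d_K² ≤ 4 ∑ f(F_j)²` and `D_K = O(F_K)`. The means stay bounded because `∑_{n < F_K} f(n)` is a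
Fibonacci convolution of the `f(F_j)`, which Binet's formula turns into `φ^K` times a partial sum of
`∑ f(F_j)` plus geometrically damped terms. So `∑_{n < F_K} f(n)² = D_K + F_K μ_K² = O(F_K)`, and
`|x| ≤ (1 + x²) / 2` with `N ≤ F_K ≤ 2N` gives the claim.
-/

open Filter Finset Topology

/-- `f : ℕ → ℝ` is `Z`-additive (additive along Zeckendorf expansions). -/
def IsZAdditive (f : ℕ → ℝ) : Prop :=
  f 0 = 0 ∧ ∀ k m : ℕ, 2 ≤ k → m < Nat.fib (k - 1) →
    f (Nat.fib k + m) = f (Nat.fib k) + f m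

open scoped BigOperators goldenRatio

theorem Finset.sum_sub_sq_eq_sum_sub_expect_sq_add {ι : Type*} (s : Finset ι) (x : ι → ℝ)
    (c : ℝ) :
    ∑ i ∈ s, (x i - c) ^ 2 = ∑ i ∈ s, (x i - 𝔼 j ∈ s, x j) ^ 2 + #s * ((𝔼 j ∈ s, x j) - c) ^ 2 := by
  set m := 𝔼 j ∈ s, x j
  have hm : ∑ i ∈ s, x i = #s * m := (card_mul_expect s x).symm
  have hexpand : ∀ i ∈ s, (x i - c) ^ 2 =
      (x i - m) ^ 2 + (2 * (m - c) * x i - 2 * (m - c) * m + (m - c) ^ 2) := fun i _ => by ring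
  rw [sum_congr rfl hexpand, sum_add_distrib, sum_add_distrib, sum_sub_distrib, ← mul_sum, hm]
  simp only [sum_const, nsmul_eq_mul]
  ring

theorem Finset.sum_abs_le_card_add_sum_sq_div_two {ι : Type*} (s : Finset ι) (x : ι → ℝ) :
    ∑ i ∈ s, |x i| ≤ (#s + ∑ i ∈ s, x i ^ 2) / 2 := by
  rw [← nsmul_one, ← sum_const, ← sum_add_distrib, sum_div]
  exact sum_le_sum fun i _ => by nlinarith [sq_abs (x i), sq_nonneg (|x i| - 1)]

theorem mul_sq_add_mul_sq_le {a b x y m : ℝ} (hab : 0 ≤ a + b)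
    (hm : (a + b) * m = a * x + b * y) :
    a * (x - m) ^ 2 + b * (y - m) ^ 2 ≤ b * (y - x) ^ 2 := by
  have h : b * (y - x) ^ 2 = a * (x - m) ^ 2 + b * (y - m) ^ 2 + (a + b) * (x - m) ^ 2 := by
    linear_combination 2 * (x - m) * hm
  linarith [mul_nonneg hab (sq_nonneg (x - m))]

theorem abs_le_two_mul_of_forall_abs_sum_range_le {e : ℕ → ℝ} {M : ℝ}
    (hM : ∀ n, |∑ k ∈ range n, e k| ≤ M) (k : ℕ) : |e k| ≤ 2 * M := by
  have h := abs_sub (∑ i ∈ range (k + 1), e i) (∑ i ∈ range k, e i)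
  rw [sum_range_succ, add_sub_cancel_left] at h
  have h' := hM (k + 1)
  rw [sum_range_succ] at h'
  linarith [hM k]

theorem sum_sq_le_four_mul_sum_sq_of_abs_sub_le_half {d e : ℕ → ℝ} (h₀ : |d 0| ≤ |e 0|)
    (h : ∀ K, |d (K + 1) - e (K + 1)| ≤ |d K| / 2) (n : ℕ) :
    ∑ K ∈ range n, d K ^ 2 ≤ 4 * ∑ K ∈ range n, e K ^ 2 := by
  have hstep : ∀ K, 2 * d (K + 1) ^ 2 ≤ 4 * e (K + 1) ^ 2 + d K ^ 2 := fun K => by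
    have := sq_le_sq' (abs_le.1 (h K)).1 (abs_le.1 (h K)).2
    nlinarith [sq_nonneg (d (K + 1) - 2 * e (K + 1)), sq_abs (d K)]
  have hinv : ∀ n, ∑ K ∈ range (n + 1), d K ^ 2 + d n ^ 2 ≤ 4 * ∑ K ∈ range (n + 1), e K ^ 2 := by
    intro n
    induction n with
    | zero =>
      have := sq_le_sq' (abs_le.1 h₀).1 (abs_le.1 h₀).2
      simp only [zero_add, sum_range_one]
      nlinarith [sq_abs (e 0), sq_abs (d 0), sq_nonneg (e 0)]
    | succ n ih =>
      rw [sum_range_succ, sum_range_succ (fun K => e K ^ 2)]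
      linarith [hstep n]
  cases n with
  | zero => simp
  | succ n => linarith [hinv n, sq_nonneg (d n)]

theorem le_fib_mul_sum_of_le_add {D c : ℕ → ℝ} (hc : ∀ K, 0 ≤ c K) (h₀ : D 0 ≤ 0)
    (h₁ : D 1 ≤ 0) (h : ∀ K, D (K + 2) ≤ D (K + 1) + D K + Nat.fib (K + 1) * c K) (K : ℕ) :
    D K ≤ Nat.fib (K + 1) * ∑ i ∈ range K, c i := by
  induction K using Nat.twoStepInduction with
  | zero => simpa using h₀
  | one => simpa using h₁.trans (by simpa using hc 0)
  | more K ih₀ ih₁ =>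
    have hsum : ∑ i ∈ range (K + 1), c i ≤ ∑ i ∈ range (K + 2), c i :=
      sum_le_sum_of_subset_of_nonneg (range_subset_range.2 (by omega)) fun i _ _ => hc i
    have hfib : (Nat.fib (K + 3) : ℝ) = Nat.fib (K + 1) + Nat.fib (K + 2) := by
      exact_mod_cast Nat.fib_add_two
    calc D (K + 2) ≤ Nat.fib (K + 2) * ∑ i ∈ range (K + 1), c i
          + Nat.fib (K + 1) * ∑ i ∈ range K, c i + Nat.fib (K + 1) * c K := by linarith [h K]
      _ = Nat.fib (K + 3) * ∑ i ∈ range (K + 1), c i := by rw [hfib, sum_range_succ]; ring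
      _ ≤ Nat.fib (K + 3) * ∑ i ∈ range (K + 2), c i := by gcongr

theorem eq_sum_antidiagonal_mul_fib {u w : ℕ → ℝ} (h₀ : u 0 = 0) (h₁ : u 1 = 0)
    (h : ∀ K, u (K + 2) = u (K + 1) + u K + w K) (n : ℕ) :
    u (n + 1) = ∑ p ∈ antidiagonal n, w p.1 * Nat.fib p.2 := by
  induction n using Nat.twoStepInduction with
  | zero => simpa using h₁
  | one => simp [h, h₀, h₁, Nat.sum_antidiagonal_succ']
  | more n ih₀ ih₁ =>
    rw [h, ih₀, ih₁, Nat.sum_antidiagonal_succ', Nat.sum_antidiagonal_succ',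
      Nat.sum_antidiagonal_succ' (n := n)]
    simp only [Nat.fib_add_two, Nat.fib_zero, Nat.fib_one, Nat.cast_add, Nat.cast_zero,
      Nat.cast_one, mul_add, mul_zero, mul_one, zero_add, sum_add_distrib]
    ring

theorem Real.abs_goldenConj_sq_le_half : |-ψ ^ 2| ≤ 1 / 2 := by
  have h5 : (2 : ℝ) ≤ √5 := by
    nlinarith [Real.sq_sqrt (show (0 : ℝ) ≤ 5 by norm_num), Real.sqrt_nonneg 5]
  rw [abs_neg, abs_of_nonneg (sq_nonneg _), Real.goldenConj_sq, Real.goldenConj]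
  linarith

-- Binet's formula for both factors, using `ψ = φ * (-ψ ^ 2)`.
theorem Real.five_mul_fib_mul_fib (a b : ℕ) :
    5 * Nat.fib a * Nat.fib b =
      φ ^ (a + b) * (1 + (-ψ ^ 2) ^ (a + b) - (-ψ ^ 2) ^ a - (-ψ ^ 2) ^ b) := by
  have hψ : ∀ k : ℕ, ψ ^ k = φ ^ k * (-ψ ^ 2) ^ k := fun k => by
    rw [← mul_pow, show φ * -ψ ^ 2 = -(φ * ψ) * ψ by ring, Real.goldenRatio_mul_goldenConj]
    ring
  have h5 : √5 * √5 = 5 := Real.mul_self_sqrt (by norm_num)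
  have hne : √5 ≠ 0 := by positivity
  rw [Real.coe_fib_eq, Real.coe_fib_eq, hψ a, hψ b]
  generalize √5 = s at h5 hne
  generalize -ψ ^ 2 = q
  generalize φ = x
  field_simp
  linear_combination (-(x ^ a * x ^ b * (1 - q ^ a) * (1 - q ^ b))) * h5

theorem Real.goldenRatio_pow_le_two_mul_fib (n : ℕ) : φ ^ n ≤ 2 * Nat.fib (n + 1) := by
  have h := Real.fib_succ_sub_goldenConj_mul_fib n
  have hmono : (Nat.fib n : ℝ) ≤ Nat.fib (n + 1) := by exact_mod_cast Nat.fib_le_fib_succ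
  nlinarith [Real.neg_one_lt_goldenConj, Nat.cast_nonneg (α := ℝ) (Nat.fib n)]

theorem five_mul_sum_antidiagonal_fib_mul_eq (e : ℕ → ℝ) (n : ℕ) :
    5 * ∑ p ∈ antidiagonal n, Nat.fib (p.1 + 1) * e p.1 * Nat.fib p.2 =
      φ ^ (n + 1) * ((1 + (-ψ ^ 2) ^ (n + 1)) * ∑ k ∈ range (n + 1), e k
        - ∑ p ∈ antidiagonal n, (-ψ ^ 2) ^ (p.1 + 1) * e p.1
        - ∑ p ∈ antidiagonal n, (-ψ ^ 2) ^ p.2 * e p.1) := by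
  rw [← Nat.sum_antidiagonal_eq_sum_range_succ (fun i _ => e i), mul_sum, mul_sum,
    ← sum_sub_distrib, ← sum_sub_distrib, mul_sum]
  refine sum_congr rfl fun p hp => ?_
  have h5 := Real.five_mul_fib_mul_fib (p.1 + 1) p.2
  rw [show p.1 + 1 + p.2 = n + 1 by rw [← mem_antidiagonal.1 hp]; ring] at h5
  linear_combination e p.1 * h5

-- Only the constant term of the Binet expansion is undamped, and it meets a partial sum of `e`.
theorem abs_sum_antidiagonal_fib_mul_le {e : ℕ → ℝ} {M : ℝ}
    (hM : ∀ n, |∑ k ∈ range n, e k| ≤ M) (n : ℕ) :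
    |∑ p ∈ antidiagonal n, Nat.fib (p.1 + 1) * e p.1 * Nat.fib p.2| ≤ 2 * M * φ ^ (n + 1) := by
  set q := -ψ ^ 2
  have hM0 : 0 ≤ M := (abs_nonneg _).trans (hM 0)
  have hdamped : ∀ g : ℕ × ℕ → ℕ, |∑ p ∈ antidiagonal n, q ^ g p * e p.1| ≤
      2 * M * ∑ p ∈ antidiagonal n, (1 / 2 : ℝ) ^ g p := by
    intro g
    rw [mul_sum]
    refine (abs_sum_le_sum_abs _ _).trans (sum_le_sum fun p _ => ?_)
    rw [abs_mul, abs_pow, mul_comm]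
    exact mul_le_mul (abs_le_two_mul_of_forall_abs_sum_range_le hM _)
      (pow_le_pow_left₀ (abs_nonneg _) Real.abs_goldenConj_sq_le_half _) (by positivity)
      (by positivity)
  have hgeom : ∑ p ∈ antidiagonal n, (1 / 2 : ℝ) ^ p.1 ≤ 2 := by
    rw [Nat.sum_antidiagonal_eq_sum_range_succ (fun i _ => (1 / 2 : ℝ) ^ i)]
    exact sum_geometric_two_le _
  have hgeom₁ : ∑ p ∈ antidiagonal n, (1 / 2 : ℝ) ^ (p.1 + 1) ≤ 1 := by
    simp only [pow_succ, ← sum_mul]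
    linarith
  have hgeom₂ : ∑ p ∈ antidiagonal n, (1 / 2 : ℝ) ^ p.2 ≤ 2 :=
    (Nat.sum_antidiagonal_swap (f := fun p => (1 / 2 : ℝ) ^ p.1)).le.trans hgeom
  have hconst : |(1 + q ^ (n + 1)) * ∑ k ∈ range (n + 1), e k| ≤ 2 * M := by
    have hq : |q| ^ (n + 1) ≤ 1 :=
      pow_le_one₀ (abs_nonneg _) (Real.abs_goldenConj_sq_le_half.trans (by norm_num))
    have hq' : |1 + q ^ (n + 1)| ≤ 2 := by
      linarith [abs_add_le 1 (q ^ (n + 1)), abs_pow q (n + 1), abs_one (α := ℝ)]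
    rw [abs_mul]
    exact mul_le_mul hq' (hM _) (abs_nonneg _) (by norm_num)
  have h₁ := (hdamped (fun p => p.1 + 1)).trans (mul_le_of_le_one_right (by positivity) hgeom₁)
  have h₂ := (hdamped (fun p => p.2)).trans (mul_le_mul_of_nonneg_left hgeom₂ (by positivity))
  have h5 : 5 * |∑ p ∈ antidiagonal n, Nat.fib (p.1 + 1) * e p.1 * Nat.fib p.2| ≤
      φ ^ (n + 1) * (10 * M) := by
    rw [← abs_of_pos (show (0 : ℝ) < 5 by norm_num), ← abs_mul,
      five_mul_sum_antidiagonal_fib_mul_eq, abs_mul,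
      abs_of_pos (pow_pos Real.goldenRatio_pos _)]
    gcongr
    refine (abs_sub _ _).trans ?_
    linarith [abs_sub ((1 + q ^ (n + 1)) * ∑ k ∈ range (n + 1), e k)
      (∑ p ∈ antidiagonal n, q ^ (p.1 + 1) * e p.1)]
  linarith

theorem Nat.exists_fib_le_two_mul {N : ℕ} (hN : N ≠ 0) :
    ∃ K, N ≤ Nat.fib K ∧ Nat.fib K ≤ 2 * N := by
  obtain ⟨j, hj⟩ : ∃ j, Nat.greatestFib N = j + 1 :=
    Nat.exists_eq_add_one.2 (Nat.greatestFib_pos.2 (Nat.pos_of_ne_zero hN))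
  refine ⟨j + 2, (hj ▸ Nat.lt_fib_greatestFib_add_one N).le, ?_⟩
  have h := Nat.fib_greatestFib_le N
  rw [hj] at h
  rw [Nat.fib_add_two]
  linarith [Nat.fib_mono (Nat.le_succ j)]

theorem exists_forall_abs_sum_range_add_two_le {a : ℕ → ℝ}
    (h : ∃ S, Tendsto (fun J => ∑ j ∈ Icc 2 J, a j) atTop (𝓝 S)) :
    ∃ M, ∀ n, |∑ k ∈ range n, a (k + 2)| ≤ M := by
  obtain ⟨S, hS⟩ := h
  obtain ⟨M, hM⟩ := isBounded_iff_forall_norm_le.1 (Metric.isBounded_range_of_tendsto _ hS)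
  refine ⟨M, fun n => ?_⟩
  have h := hM _ ⟨n + 1, rfl⟩
  dsimp only at h
  rw [Real.norm_eq_abs, ← Ico_add_one_right_eq_Icc, sum_Ico_eq_sum_range,
    show n + 1 + 1 - 2 = n by omega] at h
  simpa only [add_comm] using h

noncomputable def fibBlockMean (f : ℕ → ℝ) (K : ℕ) : ℝ := 𝔼 n ∈ range (Nat.fib K), f n

noncomputable def fibBlockSqDev (f : ℕ → ℝ) (K : ℕ) : ℝ :=
  ∑ n ∈ range (Nat.fib K), (f n - fibBlockMean f K) ^ 2

-- The mean of `f` on `[F_{K+2}, F_{K+3})` minus its mean on `[0, F_{K+2})`, for Z-additive `f`.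
noncomputable def fibBlockGap (f : ℕ → ℝ) (K : ℕ) : ℝ :=
  f (Nat.fib (K + 2)) + fibBlockMean f (K + 1) - fibBlockMean f (K + 2)

theorem fibBlockMean_zero (f : ℕ → ℝ) : fibBlockMean f 0 = 0 := by
  simp [fibBlockMean]

theorem fib_mul_fibBlockMean (f : ℕ → ℝ) (K : ℕ) :
    (Nat.fib K : ℝ) * fibBlockMean f K = ∑ n ∈ range (Nat.fib K), f n := by
  rw [fibBlockMean, ← card_mul_expect, card_range]

theorem sum_range_fib_sub_sq_eq (f : ℕ → ℝ) (K : ℕ) (c : ℝ) :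
    ∑ n ∈ range (Nat.fib K), (f n - c) ^ 2 =
      fibBlockSqDev f K + Nat.fib K * (fibBlockMean f K - c) ^ 2 := by
  simpa [fibBlockSqDev, fibBlockMean] using
    sum_sub_sq_eq_sum_sub_expect_sq_add (range (Nat.fib K)) f c

namespace IsZAdditive

variable {f : ℕ → ℝ}

theorem fibBlockMean_one (hf : IsZAdditive f) : fibBlockMean f 1 = 0 := by
  simp [fibBlockMean, hf.1]

theorem fibBlockMean_two (hf : IsZAdditive f) : fibBlockMean f 2 = 0 := by
  simp [fibBlockMean, hf.1]

theorem sum_range_fib_add_three (hf : IsZAdditive f) (g : ℝ → ℝ) (K : ℕ) :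
    ∑ n ∈ range (Nat.fib (K + 3)), g (f n) = ∑ n ∈ range (Nat.fib (K + 2)), g (f n) +
      ∑ m ∈ range (Nat.fib (K + 1)), g (f (Nat.fib (K + 2)) + f m) := by
  rw [Nat.fib_add_two (n := K + 1), add_comm (Nat.fib (K + 1)), sum_range_add]
  congr 1
  refine sum_congr rfl fun m hm => ?_
  rw [hf.2 (K + 2) m (by omega) (by simpa using hm)]

theorem sum_range_fib_add_three_eq (hf : IsZAdditive f) (K : ℕ) :
    ∑ n ∈ range (Nat.fib (K + 3)), f n = ∑ n ∈ range (Nat.fib (K + 2)), f n +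
      ∑ n ∈ range (Nat.fib (K + 1)), f n + Nat.fib (K + 1) * f (Nat.fib (K + 2)) := by
  have h := hf.sum_range_fib_add_three id K
  simp only [id] at h
  rw [h]
  simp only [sum_add_distrib, sum_const, card_range, nsmul_eq_mul]
  ring

theorem fib_mul_fibBlockMean_add_three_sub (hf : IsZAdditive f) (K : ℕ) :
    (Nat.fib (K + 3) : ℝ) * (fibBlockMean f (K + 3) - fibBlockMean f (K + 2)) =
      Nat.fib (K + 1) * fibBlockGap f K := by
  have hfib : (Nat.fib (K + 3) : ℝ) = Nat.fib (K + 1) + Nat.fib (K + 2) := by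
    exact_mod_cast Nat.fib_add_two
  have h := hf.sum_range_fib_add_three_eq K
  simp only [← fib_mul_fibBlockMean] at h
  rw [fibBlockGap]
  linear_combination h - fibBlockMean f (K + 2) * hfib

theorem abs_fibBlockGap_add_one_sub_le (hf : IsZAdditive f) (K : ℕ) :
    |fibBlockGap f (K + 1) - f (Nat.fib (K + 3))| ≤ |fibBlockGap f K| / 2 := by
  have hpos : (0 : ℝ) < Nat.fib (K + 3) := by exact_mod_cast Nat.fib_pos.2 (by omega)
  have hfib : 2 * (Nat.fib (K + 1) : ℝ) ≤ Nat.fib (K + 3) := by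
    have : Nat.fib (K + 1) ≤ Nat.fib (K + 2) := Nat.fib_mono (by omega)
    have : Nat.fib (K + 3) = Nat.fib (K + 1) + Nat.fib (K + 2) := Nat.fib_add_two
    exact_mod_cast (by omega : 2 * Nat.fib (K + 1) ≤ Nat.fib (K + 3))
  have h := congrArg abs (hf.fib_mul_fibBlockMean_add_three_sub K)
  rw [abs_mul, abs_mul, abs_of_pos hpos, Nat.abs_cast] at h
  rw [show fibBlockGap f (K + 1) - f (Nat.fib (K + 3)) =
      -(fibBlockMean f (K + 3) - fibBlockMean f (K + 2)) by rw [fibBlockGap]; ring,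
    abs_neg, le_div_iff₀ two_pos]
  nlinarith [abs_nonneg (fibBlockGap f K),
    abs_nonneg (fibBlockMean f (K + 3) - fibBlockMean f (K + 2))]

theorem sum_range_fibBlockGap_sq_le (hf : IsZAdditive f) (n : ℕ) :
    ∑ k ∈ range n, fibBlockGap f k ^ 2 ≤ 4 * ∑ k ∈ range n, f (Nat.fib (k + 2)) ^ 2 :=
  sum_sq_le_four_mul_sum_sq_of_abs_sub_le_half (e := fun k => f (Nat.fib (k + 2)))
    (by simp [fibBlockGap, hf.fibBlockMean_one, hf.fibBlockMean_two])
    hf.abs_fibBlockGap_add_one_sub_le n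

theorem fibBlockSqDev_add_three_le (hf : IsZAdditive f) (K : ℕ) :
    fibBlockSqDev f (K + 3) ≤ fibBlockSqDev f (K + 2) + fibBlockSqDev f (K + 1) +
      Nat.fib (K + 1) * fibBlockGap f K ^ 2 := by
  set m := fibBlockMean f (K + 3)
  set e := f (Nat.fib (K + 2))
  have hsplit : fibBlockSqDev f (K + 3) = ∑ n ∈ range (Nat.fib (K + 2)), (f n - m) ^ 2 +
      ∑ n ∈ range (Nat.fib (K + 1)), (f n - (m - e)) ^ 2 := by
    rw [fibBlockSqDev, hf.sum_range_fib_add_three (fun y => (y - m) ^ 2)]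
    congr 1
    exact sum_congr rfl fun n _ => by ring
  have hgap := hf.fib_mul_fibBlockMean_add_three_sub K
  rw [fibBlockGap] at hgap
  have hfib : (Nat.fib (K + 3) : ℝ) = Nat.fib (K + 1) + Nat.fib (K + 2) := by
    exact_mod_cast Nat.fib_add_two
  have htwo := mul_sq_add_mul_sq_le (by positivity)
    (show ((Nat.fib (K + 2) : ℝ) + Nat.fib (K + 1)) * m =
        Nat.fib (K + 2) * fibBlockMean f (K + 2) + Nat.fib (K + 1) * (fibBlockMean f (K + 1) + e) by
      linear_combination hgap - (m - fibBlockMean f (K + 2)) * hfib)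
  rw [hsplit, sum_range_fib_sub_sq_eq, sum_range_fib_sub_sq_eq, fibBlockGap]
  linarith [show (fibBlockMean f (K + 1) - (m - e)) ^ 2 = (fibBlockMean f (K + 1) + e - m) ^ 2 by
      ring,
    show (fibBlockMean f (K + 1) + e - fibBlockMean f (K + 2)) ^ 2 =
      (e + fibBlockMean f (K + 1) - fibBlockMean f (K + 2)) ^ 2 by ring]

theorem fibBlockSqDev_le (hf : IsZAdditive f) {Q : ℝ}
    (hQ : ∀ n, ∑ k ∈ range n, f (Nat.fib (k + 2)) ^ 2 ≤ Q) (K : ℕ) :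
    fibBlockSqDev f K ≤ 4 * Q * Nat.fib K := by
  cases K with
  | zero => simp [fibBlockSqDev]
  | succ K =>
    have hD := le_fib_mul_sum_of_le_add (D := fun K => fibBlockSqDev f (K + 1))
      (fun k => sq_nonneg (fibBlockGap f k)) (by simp [fibBlockSqDev, hf.fibBlockMean_one, hf.1])
      (by simp [fibBlockSqDev, hf.fibBlockMean_two, hf.1]) hf.fibBlockSqDev_add_three_le K
    refine hD.trans ?_
    rw [mul_comm]
    exact mul_le_mul_of_nonneg_right ((hf.sum_range_fibBlockGap_sq_le K).trans (by linarith [hQ K]))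
      (Nat.cast_nonneg _)

theorem abs_fibBlockMean_le (hf : IsZAdditive f) {M : ℝ}
    (hM : ∀ n, |∑ k ∈ range n, f (Nat.fib (k + 2))| ≤ M) (K : ℕ) :
    |fibBlockMean f K| ≤ 4 * M := by
  have hM0 : 0 ≤ M := (abs_nonneg _).trans (hM 0)
  rcases K with _ | _ | n
  · rw [fibBlockMean_zero, abs_zero]; positivity
  · rw [hf.fibBlockMean_one, abs_zero]; positivity
  have hsum : ∑ m ∈ range (Nat.fib (n + 2)), f m =
      ∑ p ∈ antidiagonal n, Nat.fib (p.1 + 1) * f (Nat.fib (p.1 + 2)) * Nat.fib p.2 :=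
    eq_sum_antidiagonal_mul_fib (u := fun K => ∑ m ∈ range (Nat.fib (K + 1)), f m)
      (by simp [hf.1]) (by simp [hf.1]) hf.sum_range_fib_add_three_eq n
  have hpos : (0 : ℝ) < Nat.fib (n + 2) := by exact_mod_cast Nat.fib_pos.2 (by omega)
  have h := abs_sum_antidiagonal_fib_mul_le hM n
  rw [← hsum, ← fib_mul_fibBlockMean, abs_mul, Nat.abs_cast] at h
  have hφ := Real.goldenRatio_pow_le_two_mul_fib (n + 1)
  refine le_of_mul_le_mul_left ?_ hpos
  nlinarith

theorem sum_range_fib_sq_le (hf : IsZAdditive f) {M Q : ℝ}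
    (hM : ∀ n, |∑ k ∈ range n, f (Nat.fib (k + 2))| ≤ M)
    (hQ : ∀ n, ∑ k ∈ range n, f (Nat.fib (k + 2)) ^ 2 ≤ Q) (K : ℕ) :
    ∑ n ∈ range (Nat.fib K), f n ^ 2 ≤ (4 * Q + 16 * M ^ 2) * Nat.fib K := by
  have hmean : fibBlockMean f K ^ 2 ≤ 16 * M ^ 2 := by
    have h := hf.abs_fibBlockMean_le hM K
    nlinarith [sq_abs (fibBlockMean f K), abs_nonneg (fibBlockMean f K)]
  have h := sum_range_fib_sub_sq_eq f K 0
  simp only [sub_zero] at h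
  rw [h]
  nlinarith [hf.fibBlockSqDev_le hQ K, Nat.cast_nonneg (α := ℝ) (Nat.fib K)]

end IsZAdditive

/-- If the two series `∑_{j≥2} f(F_j)` and `∑_{j≥2} f(F_j)²` converge, then
`(1/N) ∑_{n<N} |f(n)| = O(1)`. -/
theorem zeckendorf_first_abs_moment_bounded (f : ℕ → ℝ) (hf : IsZAdditive f)
    (hS : ∃ S : ℝ, Tendsto (fun J : ℕ => ∑ j ∈ Finset.Icc 2 J, f (Nat.fib j)) atTop (𝓝 S))
    (hS2 : ∃ S2 : ℝ, Tendsto (fun J : ℕ => ∑ j ∈ Finset.Icc 2 J, f (Nat.fib j) ^ 2)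
      atTop (𝓝 S2)) :
    ∃ C : ℝ, ∀ N : ℕ, 1 ≤ N → ∑ n ∈ Finset.range N, |f n| ≤ C * N := by
  obtain ⟨M, hM⟩ := exists_forall_abs_sum_range_add_two_le hS
  obtain ⟨Q, hQ⟩ := exists_forall_abs_sum_range_add_two_le hS2
  have hQ0 : 0 ≤ Q := (abs_nonneg _).trans (hQ 0)
  have hsq := hf.sum_range_fib_sq_le hM fun n => (le_abs_self _).trans (hQ n)
  refine ⟨1 + 4 * Q + 16 * M ^ 2, fun N hN => ?_⟩
  obtain ⟨K, hNK, hKN⟩ := Nat.exists_fib_le_two_mul (by omega : N ≠ 0)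
  have hKN' : (Nat.fib K : ℝ) ≤ 2 * N := by exact_mod_cast hKN
  calc ∑ n ∈ range N, |f n| ≤ ∑ n ∈ range (Nat.fib K), |f n| :=
        sum_le_sum_of_subset_of_nonneg (range_subset_range.2 hNK) fun n _ _ => abs_nonneg _
    _ ≤ (Nat.fib K + ∑ n ∈ range (Nat.fib K), f n ^ 2) / 2 := by
        simpa using sum_abs_le_card_add_sum_sq_div_two (range (Nat.fib K)) f
    _ ≤ (1 + 4 * Q + 16 * M ^ 2) * N := by nlinarith [hsq K, sq_nonneg M]
end

section
/- Let η > 0 and let (a_n)_{n≥0} be a sequence of real numbers such that for every τ ∈ (0, η], ‖τ·a_n‖ → 0 as n → ∞, where ‖x‖ denotes the distance from x to the nearest integer. Then a_n → 0 as n → ∞. -/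
open Filter Topology MeasureTheory Set Pointwise

/-!
The sets `G N = {τ | ‖τ aₙ‖ ≤ 1/8 for all n ≥ N}` are closed and cover `(0, η]`, so one of them has
positive measure, and by Steinhaus' theorem `G N - G N` contains an interval `(-δ, δ)`. Since
`‖·‖` is subadditive, `‖δ' aₙ‖ ≤ 1/4 < 1/2` for all `|δ'| < δ` and `n ≥ N`, which forces
`δ |aₙ| ≤ 1/2`. For `τ = min η δ` we then have `‖τ aₙ‖ = τ |aₙ|` for `n ≥ N`, so `aₙ → 0`.
-/

lemma nearestIntDist_eq_norm (x : ℝ) : nearestIntDist x = ‖(x : AddCircle (1 : ℝ))‖ := by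
  simp [AddCircle.norm_eq, nearestIntDist]

lemma continuous_nearestIntDist : Continuous nearestIntDist := by
  rw [funext nearestIntDist_eq_norm]
  exact continuous_norm.comp (AddCircle.continuous_mk' 1)

lemma nearestIntDist_sub_le (x y : ℝ) :
    nearestIntDist (x - y) ≤ nearestIntDist x + nearestIntDist y := by
  simpa only [nearestIntDist_eq_norm, AddCircle.coe_sub] using norm_sub_le _ _

lemma nearestIntDist_eq_abs {x : ℝ} (hx : |x| ≤ 1 / 2) : nearestIntDist x = |x| := by
  rw [nearestIntDist_eq_norm, AddCircle.norm_coe_eq_abs_iff _ one_ne_zero]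
  simpa using hx

lemma isClosed_setOf_forall_nearestIntDist_mul_le (a : ℕ → ℝ) (N : ℕ) (ε : ℝ) :
    IsClosed {τ : ℝ | ∀ n ≥ N, nearestIntDist (τ * a n) ≤ ε} := by
  simp only [ofPred_forall]
  exact isClosed_biInter fun n _ =>
    isClosed_le (continuous_nearestIntDist.comp (continuous_mul_const _)) continuous_const

lemma exists_eventually_nhds_zero_forall_nearestIntDist_mul_le {s : Set ℝ} (hs : volume s ≠ 0)
    {a : ℕ → ℝ} {ε : ℝ} (h : ∀ τ ∈ s, ∀ᶠ n in atTop, nearestIntDist (τ * a n) ≤ ε) :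
    ∃ N, ∀ᶠ δ in 𝓝 0, ∀ n ≥ N, nearestIntDist (δ * a n) ≤ 2 * ε := by
  set G : ℕ → Set ℝ := fun N => {τ | ∀ n ≥ N, nearestIntDist (τ * a n) ≤ ε}
  obtain ⟨N, hN⟩ : ∃ N, volume (G N) ≠ 0 := by
    by_contra! hnull
    exact hs <| measure_mono_null (fun τ hτ => mem_iUnion.2 (eventually_atTop.1 (h τ hτ)))
      (measure_iUnion_null hnull)
  have hsteinhaus : G N - G N ∈ 𝓝 (0 : ℝ) :=
    Measure.sub_mem_nhds_zero_of_addHaar_pos volume _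
      (isClosed_setOf_forall_nearestIntDist_mul_le a N ε).measurableSet (pos_iff_ne_zero.2 hN)
  refine ⟨N, mem_of_superset hsteinhaus ?_⟩
  rintro _ ⟨τ₁, h₁, τ₂, h₂, rfl⟩ n hn
  change nearestIntDist ((τ₁ - τ₂) * a n) ≤ 2 * ε
  rw [sub_mul]
  linarith [nearestIntDist_sub_le (τ₁ * a n) (τ₂ * a n), h₁ n hn, h₂ n hn]

lemma mul_abs_le_half_of_forall_nearestIntDist_mul_lt {δ x : ℝ}
    (h : ∀ δ', |δ'| < δ → nearestIntDist (δ' * x) < 1 / 2) : δ * |x| ≤ 1 / 2 := by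
  by_contra! hlarge
  have hx : 0 < |x| := (abs_nonneg x).lt_of_ne fun h0 => by rw [← h0] at hlarge; linarith
  -- `δ' = 1 / (2 |x|)` puts `δ' x = ±1/2` at distance `1/2` from `ℤ`.
  have hhalf : |x|⁻¹ / 2 * |x| = 1 / 2 := by field_simp
  have hδ' : |x|⁻¹ / 2 < δ := by
    rw [div_lt_iff₀ two_pos, inv_lt_iff_one_lt_mul₀ hx]
    linarith
  have := h (|x|⁻¹ / 2) (by rwa [abs_of_pos (by positivity)])
  rw [nearestIntDist_eq_abs, abs_mul, abs_of_pos (by positivity), hhalf] at this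
  · exact lt_irrefl _ this
  · rw [abs_mul, abs_of_pos (by positivity), hhalf]

lemma tendsto_zero_of_tendsto_nearestIntDist_mul {τ : ℝ} (hτ : 0 < τ) {a : ℕ → ℝ}
    (hbound : ∀ᶠ n in atTop, τ * |a n| ≤ 1 / 2)
    (h : Tendsto (fun n => nearestIntDist (τ * a n)) atTop (𝓝 0)) :
    Tendsto a atTop (𝓝 0) := by
  have habs : Tendsto (fun n => τ * |a n|) atTop (𝓝 0) := by
    refine h.congr' ?_
    filter_upwards [hbound] with n hn
    rw [nearestIntDist_eq_abs (by rwa [abs_mul, abs_of_pos hτ]), abs_mul, abs_of_pos hτ]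
  rw [tendsto_zero_iff_abs_tendsto_zero, Function.comp_def]
  simpa [hτ.ne'] using habs.const_mul τ⁻¹

/-- If `‖τ·a_n‖ → 0` for every `τ ∈ (0, η]`, then `a_n → 0`. -/
theorem tendsto_zero_of_nearestIntDist (η : ℝ) (hη : 0 < η) (a : ℕ → ℝ)
    (h : ∀ τ : ℝ, 0 < τ → τ ≤ η →
      Tendsto (fun n : ℕ => nearestIntDist (τ * a n)) atTop (𝓝 0)) :
    Tendsto a atTop (𝓝 0) := by
  obtain ⟨N, hN⟩ := exists_eventually_nhds_zero_forall_nearestIntDist_mul_le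
    (s := Ioc 0 η) (ε := 1 / 8) (by simp [hη])
    fun τ hτ => (h τ hτ.1 hτ.2).eventually (eventually_le_nhds (by norm_num))
  obtain ⟨δ, hδ, hδN⟩ := Metric.eventually_nhds_iff.1 hN
  have hbound : ∀ n ≥ N, δ * |a n| ≤ 1 / 2 := fun n hn =>
    mul_abs_le_half_of_forall_nearestIntDist_mul_lt fun δ' hδ' =>
      (hδN (by simpa using hδ') n hn).trans_lt (by norm_num)
  have hτ : 0 < min η δ := lt_min hη hδ
  refine tendsto_zero_of_tendsto_nearestIntDist_mul hτ ?_ (h _ hτ (min_le_left _ _))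
  filter_upwards [eventually_ge_atTop N] with n hn
  exact (mul_le_mul_of_nonneg_right (min_le_right _ _) (abs_nonneg _)).trans (hbound n hn)
end
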